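/- arXiv:2509.26485 — 9 statements merged into one kernel-verified Lean document; each statement's English description precedes it below -/
import Mathlib

section
/- Let ζ ∈ L²(0,1) be real-valued. Suppose there exists a strictly increasing sequence of positive integers (ℓ_k) with ∑ 1/ℓ_k = ∞ such that for each k, ∫₀¹ x ζ(x) (1 - x^{2ℓ_k+1}) dx = 0 and ∫₀¹ ζ(x) x^{2ℓ_k+2} dx = 0. Then ζ = 0 almost everywhere in (0,1). -/
/-!
For `m ≥ 1` and an exponent `l > m`, the operator
`p ↦ (l - m) x^l ∫_x^1 p(t) t^(-l-1) dt` sends `x^a` to `(l - m)/(l - a) (x^a - x^l)`: it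
keeps the coefficient of `x^m`, introduces only the monomial `x^l`, and multiplies the sup norm
on `[0, 1]` by at most `1 - m/l`. Peeling `x^m` successively along the exponents
`λ_k = 2ℓ_k + 2` yields polynomials `x^m + ∑ c_k x^(λ_k)` of sup norm at most `∏ (1 - m/λ_k)`,
which tends to `0` because `∑ 1/λ_k = ∞` (Müntz–Szász). Hence `∫ ζ(x) x^m dx = 0` for all
`m ≥ 1`, so every moment of `x ζ(x)` vanishes; by Weierstrass `x ζ(x)` annihilates all
continuous functions, hence vanishes a.e., and so does `ζ`.
-/

open MeasureTheory Set

open Polynomial Filter Topology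

/-- The image of `p` under `p ↦ (l - m) x^l ∫_x^1 p(t) t^(-l-1) dt`, computed monomialwise. -/
noncomputable def muntzStep (m l : ℕ) (p : ℝ[X]) : ℝ[X] :=
  p.sum fun a c => C (c * ((l - m) / (l - a))) * (X ^ a - X ^ l)

section MuntzStep

variable {m l : ℕ} {p : ℝ[X]}

theorem coeff_muntzStep_of_ne {i : ℕ} (hi : i ≠ l) :
    (muntzStep m l p).coeff i = p.coeff i * ((l - m) / (l - i)) := by
  simp only [muntzStep, Polynomial.sum, finsetSum_coeff, coeff_C_mul, coeff_sub, coeff_X_pow,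
    if_neg hi, sub_zero, mul_ite, mul_one, mul_zero, Finset.sum_ite_eq]
  split_ifs with h
  · rfl
  · rw [notMem_support_iff.mp h, zero_mul]

theorem support_muntzStep_subset : (muntzStep m l p).support ⊆ insert l p.support := by
  intro i hi
  by_contra h
  simp only [Finset.mem_insert, not_or] at h
  rw [mem_support_iff, coeff_muntzStep_of_ne h.1, notMem_support_iff.mp h.2, zero_mul] at hi
  exact hi rfl

theorem eval_muntzStep (x : ℝ) : (muntzStep m l p).eval x =
    ∑ a ∈ p.support, p.coeff a * ((l - m) / (l - a)) * (x ^ a - x ^ l) := by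
  simp [muntzStep, Polynomial.sum, eval_finsetSum]

theorem integral_zpow_sub_one {n : ℤ} (hn : n ≠ 0) {x : ℝ} (hx : 0 < x) :
    ∫ t in x..1, t ^ (n - 1) = (1 - x ^ n) / n := by
  rw [integral_zpow (Or.inr ⟨by omega, notMem_uIcc_of_lt hx one_pos⟩), sub_add_cancel, one_zpow]
  push_cast
  ring_nf

theorem eval_muntzStep_eq_integral (hl : l ∉ p.support) {x : ℝ} (hx : 0 < x) :
    (muntzStep m l p).eval x =
      (l - m) * x ^ l * ∫ t in x..1, p.eval t * t ^ (-(l : ℤ) - 1) := by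
  have h0 : (0 : ℝ) ∉ uIcc x 1 := notMem_uIcc_of_lt hx one_pos
  have hintegrand : EqOn (fun t => p.eval t * t ^ (-(l : ℤ) - 1))
      (fun t => ∑ a ∈ p.support, p.coeff a * t ^ ((a - l : ℤ) - 1)) (uIcc x 1) := by
    intro t ht
    simp only [eval_eq_sum, Polynomial.sum, Finset.sum_mul, mul_assoc]
    refine Finset.sum_congr rfl fun a _ => ?_
    rw [← zpow_natCast, ← zpow_add₀ (ne_of_mem_of_not_mem ht h0)]
    ring_nf
  rw [intervalIntegral.integral_congr hintegrand, intervalIntegral.integral_finsetSum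
      fun a _ => (intervalIntegral.intervalIntegrable_zpow (Or.inr h0)).const_mul _,
    Finset.mul_sum, eval_muntzStep]
  refine Finset.sum_congr rfl fun a ha => ?_
  have hal : a ≠ l := ne_of_mem_of_not_mem ha hl
  rw [intervalIntegral.integral_const_mul, integral_zpow_sub_one (by omega) hx]
  have hpow : x ^ l * x ^ ((a : ℤ) - l) = x ^ a := by
    rw [← zpow_natCast, ← zpow_add₀ hx.ne', add_sub_cancel, zpow_natCast]
  have hla : (l : ℝ) - a ≠ 0 := sub_ne_zero.mpr (Nat.cast_injective.ne hal.symm)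
  have hal' : (a : ℝ) - l ≠ 0 := sub_ne_zero.mpr (Nat.cast_injective.ne hal)
  push_cast
  field_simp
  linear_combination -(p.coeff a * (l - m) * (a - l)) * hpow

theorem abs_integral_mul_zpow_le {f : ℝ → ℝ} {B : ℝ} (hl : l ≠ 0) {x : ℝ} (hx₀ : 0 < x)
    (hx₁ : x ≤ 1) (hf : ∀ t ∈ Ioc x 1, |f t| ≤ B) :
    |∫ t in x..1, f t * t ^ (-(l : ℤ) - 1)| ≤ B * ((x ^ (-(l : ℤ)) - 1) / l) := by
  calc |∫ t in x..1, f t * t ^ (-(l : ℤ) - 1)|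
      ≤ ∫ t in x..1, B * t ^ (-(l : ℤ) - 1) := by
        rw [← Real.norm_eq_abs]
        refine intervalIntegral.norm_integral_le_of_norm_le hx₁ (ae_of_all _ fun t ht => ?_)
          ((intervalIntegral.intervalIntegrable_zpow (μ := volume)
            (Or.inr (notMem_uIcc_of_lt hx₀ one_pos))).const_mul B)
        have hpos : 0 < t ^ (-(l : ℤ) - 1) := zpow_pos (hx₀.trans ht.1) _
        rw [norm_mul, Real.norm_eq_abs, Real.norm_of_nonneg hpos.le]
        exact mul_le_mul_of_nonneg_right (hf t ht) hpos.le
    _ = B * ((x ^ (-(l : ℤ)) - 1) / l) := by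
        rw [intervalIntegral.integral_const_mul, integral_zpow_sub_one (by omega) hx₀]
        push_cast
        ring

theorem abs_eval_muntzStep_le (hml : m < l) (hl : l ∉ p.support) {B : ℝ}
    (hB : ∀ t ∈ Icc (0 : ℝ) 1, |p.eval t| ≤ B) {x : ℝ} (hx : x ∈ Icc (0 : ℝ) 1) :
    |(muntzStep m l p).eval x| ≤ (1 - m / l) * B := by
  have hl₀ : (0 : ℝ) < l := by exact_mod_cast (Nat.zero_le m).trans_lt hml
  have hlm : (0 : ℝ) ≤ l - m := sub_nonneg.mpr (by exact_mod_cast hml.le)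
  have hfactor : 1 - (m : ℝ) / l = (l - m) / l := by field_simp
  have hfactor_nonneg : 0 ≤ 1 - (m : ℝ) / l := hfactor ▸ div_nonneg hlm hl₀.le
  rcases hx.1.eq_or_lt with rfl | hx₀
  · rw [← coeff_zero_eq_eval_zero, coeff_muntzStep_of_ne (by omega), coeff_zero_eq_eval_zero,
      abs_mul, Nat.cast_zero, sub_zero, ← hfactor, abs_of_nonneg hfactor_nonneg, mul_comm]
    exact mul_le_mul_of_nonneg_left (hB 0 ⟨le_rfl, zero_le_one⟩) hfactor_nonneg
  have hB₀ : 0 ≤ B := (abs_nonneg _).trans (hB 1 ⟨zero_le_one, le_rfl⟩)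
  have hxl : x ^ l * x ^ (-(l : ℤ)) = 1 := by
    rw [zpow_neg, zpow_natCast, mul_inv_cancel₀ (pow_pos hx₀ l).ne']
  have hxl_nonneg : 0 ≤ x ^ l := by positivity
  rw [eval_muntzStep_eq_integral hl hx₀, abs_mul, abs_of_nonneg (mul_nonneg hlm hxl_nonneg)]
  calc (l - m) * x ^ l * |∫ t in x..1, p.eval t * t ^ (-(l : ℤ) - 1)|
      ≤ (l - m) * x ^ l * (B * ((x ^ (-(l : ℤ)) - 1) / l)) := by
        gcongr
        exact abs_integral_mul_zpow_le ((Nat.zero_le m).trans_lt hml).ne' hx₀ hx.2 fun t ht =>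
          hB t ⟨hx₀.le.trans ht.1.le, ht.2⟩
    _ = (1 - m / l) * B * (1 - x ^ l) := by
        rw [hfactor]
        field_simp
        linear_combination (l - m) * B * hxl
    _ ≤ (1 - m / l) * B := by nlinarith [mul_nonneg hfactor_nonneg hB₀]

end MuntzStep

noncomputable def muntzPoly (m : ℕ) (l : ℕ → ℕ) : ℕ → ℝ[X]
  | 0 => X ^ m
  | n + 1 => muntzStep m (l n) (muntzPoly m l n)

section MuntzPoly

variable {m : ℕ} {l : ℕ → ℕ}

theorem support_muntzPoly_subset (n : ℕ) :
    (muntzPoly m l n).support ⊆ insert m ((Finset.range n).image l) := by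
  induction n with
  | zero => simp [muntzPoly, support_X_pow]
  | succ n ih =>
    refine support_muntzStep_subset.trans ?_
    rw [Finset.range_add_one, Finset.image_insert, Finset.insert_comm]
    exact Finset.insert_subset_insert _ ih

theorem coeff_muntzPoly_self (hl : ∀ j, l j ≠ m) (n : ℕ) : (muntzPoly m l n).coeff m = 1 := by
  induction n with
  | zero => simp [muntzPoly]
  | succ n ih =>
    have hm : (l n : ℝ) - m ≠ 0 := sub_ne_zero.mpr (Nat.cast_injective.ne (hl n))
    rw [muntzPoly, coeff_muntzStep_of_ne (hl n).symm, ih, div_self hm, one_mul]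

theorem abs_eval_muntzPoly_le (hl : ∀ j, m < l j) (hinj : Function.Injective l) (n : ℕ)
    {x : ℝ} (hx : x ∈ Icc (0 : ℝ) 1) :
    |(muntzPoly m l n).eval x| ≤ ∏ j ∈ Finset.range n, (1 - m / l j : ℝ) := by
  induction n generalizing x with
  | zero => simpa [muntzPoly, abs_of_nonneg hx.1] using pow_le_one₀ hx.1 hx.2
  | succ n ih =>
    have hfresh : l n ∉ (muntzPoly m l n).support := fun h => by
      rcases Finset.mem_insert.mp (support_muntzPoly_subset n h) with h | h
      · exact (hl n).ne' h
      · obtain ⟨j, hj, hjn⟩ := Finset.mem_image.mp h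
        exact (Finset.mem_range.mp hj).ne (hinj hjn)
    rw [Finset.prod_range_succ, mul_comm]
    exact abs_eval_muntzStep_le (hl n) hfresh (fun t ht => ih ht) hx

end MuntzPoly

theorem tendsto_prod_one_sub_of_not_summable {a : ℕ → ℝ} (ha₀ : ∀ j, 0 ≤ a j)
    (ha₁ : ∀ j, a j ≤ 1) (ha : ¬ Summable a) :
    Tendsto (fun n => ∏ j ∈ Finset.range n, (1 - a j)) atTop (𝓝 0) := by
  have hexp : Tendsto (fun n => Real.exp (-∑ j ∈ Finset.range n, a j)) atTop (𝓝 0) :=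
    Real.tendsto_exp_atBot.comp <| tendsto_neg_atTop_atBot.comp <|
      (not_summable_iff_tendsto_nat_atTop_of_nonneg ha₀).mp ha
  refine squeeze_zero (fun n => Finset.prod_nonneg fun j _ => sub_nonneg.mpr (ha₁ j))
    (fun n => ?_) hexp
  rw [← Finset.sum_neg_distrib, Real.exp_sum]
  exact Finset.prod_le_prod (fun j _ => sub_nonneg.mpr (ha₁ j))
    fun j _ => by linarith [Real.add_one_le_exp (-a j)]

section Moments

variable {g : ℝ → ℝ}

theorem integral_mul_eval_eq_sum (hg : IntegrableOn g (Ioo 0 1)) (p : ℝ[X]) :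
    ∫ x in Ioo (0 : ℝ) 1, g x * p.eval x =
      ∑ a ∈ p.support, p.coeff a * ∫ x in Ioo (0 : ℝ) 1, g x * x ^ a := by
  have hint (a : ℕ) : IntegrableOn (fun x => g x * x ^ a) (Ioo 0 1) :=
    hg.mul_continuousOn_of_subset (continuous_pow a).continuousOn measurableSet_Ioo
      isCompact_Icc Ioo_subset_Icc_self
  have hsum (x : ℝ) : g x * p.eval x = ∑ a ∈ p.support, p.coeff a * (g x * x ^ a) := by
    rw [eval_eq_sum, Polynomial.sum, Finset.mul_sum]
    exact Finset.sum_congr rfl fun a _ => by ring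
  simp_rw [hsum]
  rw [integral_finsetSum _ fun a _ => (hint a).const_mul _]
  simp_rw [integral_const_mul]

theorem abs_integral_mul_le (hg : IntegrableOn g (Ioo 0 1)) {f : ℝ → ℝ} {B : ℝ}
    (hf : ∀ x ∈ Ioo (0 : ℝ) 1, |f x| ≤ B) :
    |∫ x in Ioo (0 : ℝ) 1, g x * f x| ≤ (∫ x in Ioo (0 : ℝ) 1, |g x|) * B := by
  rw [← integral_mul_const, ← Real.norm_eq_abs]
  refine norm_integral_le_of_norm_le (hg.norm.mul_const B) ?_
  filter_upwards [ae_restrict_mem measurableSet_Ioo] with x hx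
  rw [norm_mul]
  exact mul_le_mul_of_nonneg_left (hf x hx) (norm_nonneg _)

theorem integral_mul_pow_eq_zero_of_not_summable (hg : IntegrableOn g (Ioo 0 1))
    {Λ : ℕ → ℕ} (hΛ : StrictMono Λ) (hdiv : ¬ Summable fun k => (1 : ℝ) / Λ k)
    (hvan : ∀ k, ∫ x in Ioo (0 : ℝ) 1, g x * x ^ Λ k = 0) {m : ℕ} (hm : m ≠ 0) :
    ∫ x in Ioo (0 : ℝ) 1, g x * x ^ m = 0 := by
  set l : ℕ → ℕ := fun j => Λ (j + (m + 1))
  have hl (j : ℕ) : m < l j := (by omega : m < j + (m + 1)).trans_le hΛ.le_apply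
  have hlinj : Function.Injective l := hΛ.injective.comp (add_left_injective _)
  have hmoment (n : ℕ) : ∫ x in Ioo (0 : ℝ) 1, g x * (muntzPoly m l n).eval x =
      ∫ x in Ioo (0 : ℝ) 1, g x * x ^ m := by
    rw [integral_mul_eval_eq_sum hg, Finset.sum_eq_single m,
      coeff_muntzPoly_self (fun j => (hl j).ne'), one_mul]
    · intro a ha ham
      obtain ⟨j, -, rfl⟩ := Finset.mem_image.mp
        ((Finset.mem_insert.mp (support_muntzPoly_subset n ha)).resolve_left ham)
      rw [hvan, mul_zero]
    · intro hm
      rw [notMem_support_iff.mp hm, zero_mul]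
  have hprod : Tendsto (fun n => ∏ j ∈ Finset.range n, (1 - m / l j : ℝ)) atTop (𝓝 0) := by
    refine tendsto_prod_one_sub_of_not_summable (fun j => by positivity)
      (fun j => div_le_one_of_le₀ (by exact_mod_cast (hl j).le) (Nat.cast_nonneg _))
      fun hs => hdiv ((summable_nat_add_iff (m + 1)).mp ?_)
    have hm' : (m : ℝ) ≠ 0 := by exact_mod_cast hm
    simpa [div_eq_mul_inv, ← mul_assoc, inv_mul_cancel₀ hm'] using hs.mul_left (m : ℝ)⁻¹
  refine abs_nonpos_iff.mp <| ge_of_tendsto'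
    (by simpa using hprod.const_mul (∫ x in Ioo (0 : ℝ) 1, |g x|)) fun n => ?_
  rw [← hmoment n]
  exact abs_integral_mul_le hg fun x hx =>
    abs_eval_muntzPoly_le hl hlinj n (Ioo_subset_Icc_self hx)

theorem integral_mul_eq_zero_of_forall_integral_mul_pow_eq_zero
    (hg : IntegrableOn g (Ioo 0 1)) (h : ∀ n : ℕ, ∫ x in Ioo (0 : ℝ) 1, g x * x ^ n = 0)
    {f : ℝ → ℝ} (hf : ContinuousOn f (Icc 0 1)) : ∫ x in Ioo (0 : ℝ) 1, g x * f x = 0 := by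
  set C := ∫ x in Ioo (0 : ℝ) 1, |g x|
  have hC : 0 ≤ C := integral_nonneg fun x => abs_nonneg _
  have happrox (ε : ℝ) (hε : 0 < ε) : |∫ x in Ioo (0 : ℝ) 1, g x * f x| ≤ C * ε := by
    obtain ⟨p, hp⟩ := exists_polynomial_near_of_continuousOn 0 1 f hf ε hε
    have hint (q : ℝ → ℝ) (hq : ContinuousOn q (Icc 0 1)) :
        IntegrableOn (fun x => g x * q x) (Ioo 0 1) :=
      hg.mul_continuousOn_of_subset hq measurableSet_Ioo isCompact_Icc Ioo_subset_Icc_self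
    have hgp : ∫ x in Ioo (0 : ℝ) 1, g x * p.eval x = 0 := by
      simp [integral_mul_eval_eq_sum hg, h]
    have hsplit : ∫ x in Ioo (0 : ℝ) 1, g x * f x =
        ∫ x in Ioo (0 : ℝ) 1, g x * (f x - p.eval x) := by
      simp_rw [mul_sub]
      rw [integral_sub (hint f hf) (hint _ p.continuous.continuousOn), hgp, sub_zero]
    rw [hsplit]
    exact abs_integral_mul_le hg fun x hx => by
      rw [abs_sub_comm]
      exact (hp x (Ioo_subset_Icc_self hx)).le
  refine abs_nonpos_iff.mp (le_of_forall_pos_le_add fun ε hε => ?_)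
  calc |∫ x in Ioo (0 : ℝ) 1, g x * f x| ≤ C * (ε / (C + 1)) := happrox _ (by positivity)
    _ ≤ 0 + ε := by
      rw [zero_add, mul_div_assoc']
      exact div_le_of_le_mul₀ (by positivity) hε.le (by nlinarith)

theorem ae_eq_zero_of_forall_integral_mul_pow_eq_zero (hg : IntegrableOn g (Ioo 0 1))
    (h : ∀ n : ℕ, ∫ x in Ioo (0 : ℝ) 1, g x * x ^ n = 0) :
    g =ᵐ[volume.restrict (Ioo (0 : ℝ) 1)] 0 :=
  ae_eq_zero_of_integral_contDiff_smul_eq_zero hg.locallyIntegrable fun φ hφ _ => by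
    simpa only [smul_eq_mul, mul_comm] using
      integral_mul_eq_zero_of_forall_integral_mul_pow_eq_zero hg h hφ.continuous.continuousOn

end Moments

theorem stmt0_general (ζ : ℝ → ℝ)
    (hζ : MemLp ζ 2 (volume.restrict (Ioo (0:ℝ) 1)))
    (ℓ : ℕ → ℕ) (hmono : StrictMono ℓ)
    (hdiv : ¬ Summable (fun k => (1 : ℝ) / (ℓ k : ℝ)))
    (h2 : ∀ k, ∫ x in (0:ℝ)..1, ζ x * x ^ (2 * ℓ k + 2) = 0) :
    ζ =ᵐ[volume.restrict (Ioo (0:ℝ) 1)] 0 := by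
  have hζint : IntegrableOn ζ (Ioo 0 1) := hζ.integrable one_le_two
  have hvan (k : ℕ) : ∫ x in Ioo (0 : ℝ) 1, ζ x * x ^ (2 * ℓ k + 2) = 0 := by
    simpa only [intervalIntegral.integral_of_le zero_le_one, integral_Ioc_eq_integral_Ioo]
      using h2 k
  have hdiv' : ¬ Summable fun k => (1 : ℝ) / (2 * ℓ k + 2 : ℕ) := fun hs => hdiv <|
    (hs.mul_left 4).of_nonneg_of_le (fun k => by positivity) fun k => by
      rcases Nat.eq_zero_or_pos (ℓ k) with h | h
      · simp [h]
      · rw [mul_one_div, div_le_div_iff₀ (by positivity) (by positivity)]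
        push_cast
        linarith [(Nat.one_le_cast (α := ℝ)).mpr h]
  have hmom (n : ℕ) : ∫ x in Ioo (0 : ℝ) 1, x * ζ x * x ^ n = 0 := by
    convert integral_mul_pow_eq_zero_of_not_summable hζint
      (fun i j hij => by simp [hmono hij]) hdiv' hvan n.add_one_ne_zero using 3 with x
    ring
  have hxζ : (fun x => x * ζ x) =ᵐ[volume.restrict (Ioo (0 : ℝ) 1)] 0 :=
    ae_eq_zero_of_forall_integral_mul_pow_eq_zero
      (hζint.continuousOn_mul_of_subset continuousOn_id isCompact_Icc measurableSet_Ioo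
        Ioo_subset_Icc_self) hmom
  filter_upwards [hxζ, ae_restrict_mem measurableSet_Ioo] with x hx hx01
  exact (mul_eq_zero.mp hx).resolve_left hx01.1.ne'

theorem stmt0 (ζ : ℝ → ℝ)
    (hζ : MemLp ζ 2 (volume.restrict (Ioo (0:ℝ) 1)))
    (ℓ : ℕ → ℕ) (hmono : StrictMono ℓ) (hpos : ∀ k, 0 < ℓ k)
    (hdiv : ¬ Summable (fun k => (1 : ℝ) / (ℓ k : ℝ)))
    (h1 : ∀ k, ∫ x in (0:ℝ)..1, x * ζ x * (1 - x ^ (2 * ℓ k + 1)) = 0)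
    (h2 : ∀ k, ∫ x in (0:ℝ)..1, ζ x * x ^ (2 * ℓ k + 2) = 0) :
    ζ =ᵐ[volume.restrict (Ioo (0:ℝ) 1)] 0 :=
  stmt0_general ζ hζ ℓ hmono hdiv h2
end

section
/- For each integer ℓ ≥ 1, the operator S_ℓ defined on L²(0,1) by S_ℓ[f](x) = f(x) - 4ℓ x^{2ℓ-1} ∫ₓ¹ t^{-2ℓ} f(t) dt is a bounded linear operator on L²(0,1). -/
/-!
Write `S_ℓ = I - 4ℓ H` with `H f(x) = x^{a-1} ∫_x^1 t^{-a} f(t) dt`, `a = 2ℓ`, a dual Hardy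
operator. Splitting `t^{-a} = t^{-a/2-1/4} · t^{1/4-a/2}` and applying Cauchy–Schwarz on
`(x, 1)` gives `|H f(x)|² ≤ x^{a-3/2} (a-1/2)⁻¹ ∫_x^1 t^{1/2-a} |f(t)|² dt`. Integrating in `x`
and swapping the integrals (Tonelli), the inner integral `∫_0^t x^{a-3/2} dx = t^{a-1/2} / (a-1/2)`
cancels the weight, so `‖H f‖₂ ≤ (a-1/2)⁻¹ ‖f‖₂` whenever `a > 1/2`.
-/

open MeasureTheory Set
open scoped ENNReal NNReal

theorem lintegral_mul_sq_le {α : Type*} [MeasurableSpace α] {μ : Measure α}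
    {u v : α → ℝ≥0∞} (hu : AEMeasurable u μ) (hv : AEMeasurable v μ) :
    (∫⁻ a, u a * v a ∂μ) ^ 2 ≤ (∫⁻ a, u a ^ 2 ∂μ) * ∫⁻ a, v a ^ 2 ∂μ := by
  have h := ENNReal.lintegral_mul_le_Lp_mul_Lq μ Real.HolderConjugate.two_two hu hv
  calc (∫⁻ a, u a * v a ∂μ) ^ 2
      ≤ ((∫⁻ a, u a ^ (2 : ℝ) ∂μ) ^ (1 / 2 : ℝ) *
          (∫⁻ a, v a ^ (2 : ℝ) ∂μ) ^ (1 / 2 : ℝ)) ^ 2 :=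
        pow_le_pow_left₀ zero_le h 2
    _ = (∫⁻ a, u a ^ 2 ∂μ) * ∫⁻ a, v a ^ 2 ∂μ := by
        simp only [ENNReal.rpow_two, mul_pow, ← ENNReal.rpow_natCast, ← ENNReal.rpow_mul]
        norm_num

theorem ofReal_rpow_mul_ofReal_rpow {t : ℝ} (ht : 0 < t) (c d : ℝ) :
    ENNReal.ofReal (t ^ c) * ENNReal.ofReal (t ^ d) = ENNReal.ofReal (t ^ (c + d)) := by
  rw [← ENNReal.ofReal_mul (by positivity), Real.rpow_add ht]

theorem lintegral_Ioi_ofReal_rpow {c x : ℝ} (hc : c < -1) (hx : 0 < x) :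
    ∫⁻ t in Ioi x, ENNReal.ofReal (t ^ c) = ENNReal.ofReal (-x ^ (c + 1) / (c + 1)) := by
  rw [← ofReal_integral_eq_lintegral_ofReal (integrableOn_Ioi_rpow_of_lt hc hx),
    integral_Ioi_rpow_of_lt hc hx]
  filter_upwards [ae_restrict_mem measurableSet_Ioi] with t ht
  exact Real.rpow_nonneg (hx.trans ht).le c

theorem lintegral_Ioo_zero_ofReal_rpow {c x : ℝ} (hc : -1 < c) (hx : 0 ≤ x) :
    ∫⁻ t in Ioo 0 x, ENNReal.ofReal (t ^ c) = ENNReal.ofReal (x ^ (c + 1) / (c + 1)) := by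
  have hint : IntegrableOn (fun t : ℝ ↦ t ^ c) (Ioc 0 x) := by
    rw [← uIoc_of_le hx, ← intervalIntegrable_iff]
    exact intervalIntegral.intervalIntegrable_rpow' hc
  rw [setLIntegral_congr Ioo_ae_eq_Ioc, ← ofReal_integral_eq_lintegral_ofReal hint,
    ← intervalIntegral.integral_of_le hx, integral_rpow (Or.inl hc),
    Real.zero_rpow (by linarith), sub_zero]
  filter_upwards [ae_restrict_mem measurableSet_Ioc] with t ht
  exact Real.rpow_nonneg ht.1.le c

theorem lintegral_Ioo_mul_lintegral_Ioc_swap {μ : Measure ℝ} [SFinite μ] {a b : ℝ}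
    {w F : ℝ → ℝ≥0∞} (hw : Measurable w) (hF : Measurable F) :
    ∫⁻ x in Ioo a b, w x * ∫⁻ t in Ioc x b, F t ∂μ ∂μ =
      ∫⁻ t in Ioc a b, (∫⁻ x in Ioo a t, w x ∂μ) * F t ∂μ := by
  set S : Set (ℝ × ℝ) := {p | a < p.1 ∧ p.1 < p.2 ∧ p.2 ≤ b}
  have hS : MeasurableSet S :=
    (measurableSet_lt measurable_const measurable_fst).inter
      ((measurableSet_lt measurable_fst measurable_snd).inter
        (measurableSet_le measurable_snd measurable_const))
  set K : ℝ → ℝ → ℝ≥0∞ := fun x t ↦ S.indicator (fun p ↦ w p.1 * F p.2) (x, t)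
  have hK : Measurable (Function.uncurry K) :=
    ((hw.comp measurable_fst).mul (hF.comp measurable_snd)).indicator hS
  have hK₁ : ∀ x t, K x t = (Ioo a b).indicator w x * (Ioc x b).indicator F t := by
    intro x t
    simp only [K, S, indicator_apply, mem_ofPred_eq, mem_Ioo, mem_Ioc]
    split_ifs <;> first | rfl | (exfalso; grind) | simp
  have hK₂ : ∀ x t, K x t = (Ioo a t).indicator w x * (Ioc a b).indicator F t := by
    intro x t
    simp only [K, S, indicator_apply, mem_ofPred_eq, mem_Ioo, mem_Ioc]
    split_ifs <;> first | rfl | (exfalso; grind) | simp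
  calc ∫⁻ x in Ioo a b, w x * ∫⁻ t in Ioc x b, F t ∂μ ∂μ
      = ∫⁻ x, ∫⁻ t, K x t ∂μ ∂μ := by
        simp only [hK₁, lintegral_const_mul _ (hF.indicator measurableSet_Ioc),
          lintegral_indicator measurableSet_Ioc, ← lintegral_indicator measurableSet_Ioo,
          indicator_mul_left]
    _ = ∫⁻ t, ∫⁻ x, K x t ∂μ ∂μ := lintegral_lintegral_swap hK.aemeasurable
    _ = _ := by
        simp only [hK₂, lintegral_mul_const _ (hw.indicator measurableSet_Ioo),
          lintegral_indicator measurableSet_Ioo, ← lintegral_indicator measurableSet_Ioc,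
          indicator_mul_right]

noncomputable def lhardyTail (a : ℝ) (g : ℝ → ℝ≥0∞) (x : ℝ) : ℝ≥0∞ :=
  ENNReal.ofReal (x ^ (a - 1)) * ∫⁻ t in Ioc x 1, ENNReal.ofReal (t ^ (-a)) * g t

theorem lhardyTail_sq_le {a x : ℝ} (ha : 1 / 2 < a) (hx : 0 < x) {g : ℝ → ℝ≥0∞}
    (hg : AEMeasurable g) :
    lhardyTail a g x ^ 2 ≤ ENNReal.ofReal (a - 1 / 2)⁻¹ *
      (ENNReal.ofReal (x ^ (a - 3 / 2)) *
        ∫⁻ t in Ioc x 1, ENNReal.ofReal (t ^ (1 / 2 - a)) * g t ^ 2) := by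
  have hcs : (∫⁻ t in Ioc x 1, ENNReal.ofReal (t ^ (-a)) * g t) ^ 2 ≤
      (∫⁻ t in Ioc x 1, ENNReal.ofReal (t ^ (-a - 1 / 2))) *
        ∫⁻ t in Ioc x 1, ENNReal.ofReal (t ^ (1 / 2 - a)) * g t ^ 2 := by
    have hpos : ∀ t ∈ Ioc x 1, 0 < t := fun t ht ↦ hx.trans ht.1
    calc (∫⁻ t in Ioc x 1, ENNReal.ofReal (t ^ (-a)) * g t) ^ 2
        = (∫⁻ t in Ioc x 1, ENNReal.ofReal (t ^ (-a / 2 - 1 / 4)) *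
            (ENNReal.ofReal (t ^ (1 / 4 - a / 2)) * g t)) ^ 2 := by
          refine congrArg (· ^ 2) (setLIntegral_congr_fun measurableSet_Ioc fun t ht ↦ ?_)
          rw [← mul_assoc, ofReal_rpow_mul_ofReal_rpow (hpos t ht)]
          ring_nf
      _ ≤ (∫⁻ t in Ioc x 1, ENNReal.ofReal (t ^ (-a / 2 - 1 / 4)) ^ 2) *
            ∫⁻ t in Ioc x 1, (ENNReal.ofReal (t ^ (1 / 4 - a / 2)) * g t) ^ 2 :=
          lintegral_mul_sq_le (by fun_prop) (by fun_prop)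
      _ = _ := by
          congr 1 <;> refine setLIntegral_congr_fun measurableSet_Ioc fun t ht ↦ ?_
          · rw [sq, ofReal_rpow_mul_ofReal_rpow (hpos t ht)]
            ring_nf
          · rw [mul_pow, sq (ENNReal.ofReal _), ofReal_rpow_mul_ofReal_rpow (hpos t ht)]
            ring_nf
  have htail : ∫⁻ t in Ioc x 1, ENNReal.ofReal (t ^ (-a - 1 / 2)) ≤
      ENNReal.ofReal (x ^ (1 / 2 - a)) * ENNReal.ofReal (a - 1 / 2)⁻¹ := by
    calc ∫⁻ t in Ioc x 1, ENNReal.ofReal (t ^ (-a - 1 / 2))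
        ≤ ∫⁻ t in Ioi x, ENNReal.ofReal (t ^ (-a - 1 / 2)) :=
          lintegral_mono_set Ioc_subset_Ioi_self
      _ = ENNReal.ofReal (x ^ (1 / 2 - a)) * ENNReal.ofReal (a - 1 / 2)⁻¹ := by
        rw [lintegral_Ioi_ofReal_rpow (by linarith) hx,
          ← ENNReal.ofReal_mul (Real.rpow_nonneg hx.le _)]
        congr 1
        rw [show -a - 1 / 2 + 1 = -(a - 1 / 2) by ring, neg_div_neg_eq, div_eq_mul_inv]
        ring_nf
  have hweight : ENNReal.ofReal (x ^ (a - 1)) ^ 2 * ENNReal.ofReal (x ^ (1 / 2 - a)) =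
      ENNReal.ofReal (x ^ (a - 3 / 2)) := by
    rw [sq, ofReal_rpow_mul_ofReal_rpow hx, ofReal_rpow_mul_ofReal_rpow hx]
    ring_nf
  calc lhardyTail a g x ^ 2
      = ENNReal.ofReal (x ^ (a - 1)) ^ 2 *
          (∫⁻ t in Ioc x 1, ENNReal.ofReal (t ^ (-a)) * g t) ^ 2 := mul_pow _ _ _
    _ ≤ ENNReal.ofReal (x ^ (a - 1)) ^ 2 *
          ((ENNReal.ofReal (x ^ (1 / 2 - a)) * ENNReal.ofReal (a - 1 / 2)⁻¹) *
            ∫⁻ t in Ioc x 1, ENNReal.ofReal (t ^ (1 / 2 - a)) * g t ^ 2) := by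
        gcongr
        exact hcs.trans (mul_le_mul_left htail _)
    _ = _ := by
        rw [← hweight]
        ring

theorem lintegral_lhardyTail_sq_le {a : ℝ} (ha : 1 / 2 < a) {g : ℝ → ℝ≥0∞}
    (hg : Measurable g) :
    ∫⁻ x in Ioo 0 1, lhardyTail a g x ^ 2 ≤
      ENNReal.ofReal (a - 1 / 2)⁻¹ ^ 2 * ∫⁻ t in Ioo 0 1, g t ^ 2 := by
  set C := ENNReal.ofReal (a - 1 / 2)⁻¹
  have hweight : ∀ t ∈ Ioc (0 : ℝ) 1,
      (∫⁻ x in Ioo 0 t, ENNReal.ofReal (x ^ (a - 3 / 2))) *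
        (ENNReal.ofReal (t ^ (1 / 2 - a)) * g t ^ 2) = C * g t ^ 2 := by
    intro t ht
    rw [lintegral_Ioo_zero_ofReal_rpow (by linarith) ht.1.le, div_eq_mul_inv,
      ENNReal.ofReal_mul (Real.rpow_nonneg ht.1.le _)]
    calc _ = ENNReal.ofReal (t ^ (a - 3 / 2 + 1)) * ENNReal.ofReal (t ^ (1 / 2 - a)) *
          ENNReal.ofReal (a - 3 / 2 + 1)⁻¹ * g t ^ 2 := by ring
      _ = C * g t ^ 2 := by
          rw [ofReal_rpow_mul_ofReal_rpow ht.1, show a - 3 / 2 + 1 + (1 / 2 - a) = 0 by ring,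
            Real.rpow_zero, ENNReal.ofReal_one, one_mul, show a - 3 / 2 + 1 = a - 1 / 2 by ring]
  calc ∫⁻ x in Ioo 0 1, lhardyTail a g x ^ 2
      ≤ ∫⁻ x in Ioo 0 1, C * (ENNReal.ofReal (x ^ (a - 3 / 2)) *
          ∫⁻ t in Ioc x 1, ENNReal.ofReal (t ^ (1 / 2 - a)) * g t ^ 2) :=
        setLIntegral_mono' measurableSet_Ioo fun x hx ↦ lhardyTail_sq_le ha hx.1 hg.aemeasurable
    _ = C * ∫⁻ t in Ioc 0 1, (∫⁻ x in Ioo 0 t, ENNReal.ofReal (x ^ (a - 3 / 2))) *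
          (ENNReal.ofReal (t ^ (1 / 2 - a)) * g t ^ 2) := by
        rw [lintegral_const_mul' _ _ ENNReal.ofReal_ne_top,
          lintegral_Ioo_mul_lintegral_Ioc_swap (by fun_prop) (by fun_prop)]
    _ = C ^ 2 * ∫⁻ t in Ioo 0 1, g t ^ 2 := by
        rw [setLIntegral_congr_fun measurableSet_Ioc hweight,
          lintegral_const_mul' _ _ ENNReal.ofReal_ne_top, setLIntegral_congr Ioo_ae_eq_Ioc]
        ring

theorem MeasureTheory.StronglyMeasurable.setIntegral_Ioc_left {E : Type*} [NormedAddCommGroup E]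
    [NormedSpace ℝ E] {μ : Measure ℝ} [SFinite μ] {g : ℝ → E} (hg : StronglyMeasurable g)
    (b : ℝ) : StronglyMeasurable fun x ↦ ∫ t in Ioc x b, g t ∂μ := by
  have hS : MeasurableSet {p : ℝ × ℝ | p.1 < p.2 ∧ p.2 ≤ b} :=
    (_root_.measurableSet_lt measurable_fst measurable_snd).inter
      (_root_.measurableSet_le measurable_snd measurable_const)
  have h := StronglyMeasurable.integral_prod_right (ν := μ)
    (f := fun x t ↦ {p : ℝ × ℝ | p.1 < p.2 ∧ p.2 ≤ b}.indicator (fun p ↦ g p.2) (x, t))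
    ((hg.comp_measurable measurable_snd).indicator hS)
  convert h using 2 with x
  rw [← integral_indicator measurableSet_Ioc]
  rfl

noncomputable def hardyTail (n : ℕ) (f : ℝ → ℝ) (x : ℝ) : ℝ :=
  x ^ (n - 1) * ∫ t in Ioc x 1, (t ^ n)⁻¹ * f t

namespace hardyTail

variable {n : ℕ} {f g : ℝ → ℝ}

theorem congr_of_nonneg (h : f =ᵐ[volume.restrict (Ioo 0 1)] g) {x : ℝ} (hx : 0 ≤ x) :
    hardyTail n f x = hardyTail n g x := by
  rw [Measure.restrict_congr_set Ioo_ae_eq_Ioc] at h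
  have h' : f =ᵐ[volume.restrict (Ioc x 1)] g :=
    ae_restrict_of_ae_restrict_of_subset (Ioc_subset_Ioc_left hx) h
  unfold hardyTail
  congr 1
  exact integral_congr_ae (h'.mono fun t ht ↦ by simp only [ht])

theorem ae_congr (h : f =ᵐ[volume.restrict (Ioo 0 1)] g) :
    hardyTail n f =ᵐ[volume.restrict (Ioo 0 1)] hardyTail n g := by
  filter_upwards [ae_restrict_mem measurableSet_Ioo] with x hx using congr_of_nonneg h hx.1.le

theorem measurable (hf : Measurable f) : Measurable (hardyTail n f) :=
  (measurable_id.pow_const _).mul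
    ((by fun_prop : Measurable fun t : ℝ ↦ (t ^ n)⁻¹ * f t).stronglyMeasurable
      |>.setIntegral_Ioc_left 1).measurable

theorem aestronglyMeasurable (hf : AEStronglyMeasurable f (volume.restrict (Ioo 0 1))) :
    AEStronglyMeasurable (hardyTail n f) (volume.restrict (Ioo 0 1)) :=
  ⟨hardyTail n (hf.mk f), (measurable hf.stronglyMeasurable_mk.measurable).stronglyMeasurable,
    ae_congr hf.ae_eq_mk⟩

theorem enorm_le (hn : 1 ≤ n) {x : ℝ} (hx : 0 < x) :
    ‖hardyTail n f x‖ₑ ≤ lhardyTail n (fun t ↦ ‖f t‖ₑ) x := by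
  rw [hardyTail, lhardyTail, enorm_mul, Real.enorm_eq_ofReal (by positivity), ← Real.rpow_natCast,
    Nat.cast_sub hn, Nat.cast_one]
  gcongr
  refine (enorm_integral_le_lintegral_enorm _).trans_eq
    (setLIntegral_congr_fun measurableSet_Ioc fun t ht ↦ ?_)
  have ht : 0 < t := hx.trans ht.1
  rw [enorm_mul, Real.enorm_eq_ofReal (by positivity), ← Real.rpow_natCast, Real.rpow_neg ht.le]

theorem eLpNorm_le (hn : 1 ≤ n) (hf : AEStronglyMeasurable f (volume.restrict (Ioo 0 1))) :
    eLpNorm (hardyTail n f) 2 (volume.restrict (Ioo 0 1)) ≤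
      ENNReal.ofReal ((n : ℝ) - 1 / 2)⁻¹ * eLpNorm f 2 (volume.restrict (Ioo 0 1)) := by
  rw [eLpNorm_congr_ae (ae_congr hf.ae_eq_mk), eLpNorm_congr_ae hf.ae_eq_mk]
  have hsq : ∫⁻ x in Ioo 0 1, ‖hardyTail n (hf.mk f) x‖ₑ ^ 2 ≤
      ENNReal.ofReal ((n : ℝ) - 1 / 2)⁻¹ ^ 2 * ∫⁻ t in Ioo 0 1, ‖hf.mk f t‖ₑ ^ 2 :=
    (setLIntegral_mono' measurableSet_Ioo fun x hx ↦
      pow_le_pow_left₀ zero_le (enorm_le hn hx.1) 2).trans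
      (lintegral_lhardyTail_sq_le (by have : (1 : ℝ) ≤ n := mod_cast hn; linarith)
        hf.stronglyMeasurable_mk.measurable.enorm)
  simp only [eLpNorm_eq_lintegral_rpow_enorm_toReal two_ne_zero ENNReal.ofNat_ne_top,
    ENNReal.toReal_ofNat, ENNReal.rpow_two]
  calc (∫⁻ x in Ioo 0 1, ‖hardyTail n (hf.mk f) x‖ₑ ^ 2) ^ (1 / 2 : ℝ)
      ≤ (ENNReal.ofReal ((n : ℝ) - 1 / 2)⁻¹ ^ 2 *
          ∫⁻ t in Ioo 0 1, ‖hf.mk f t‖ₑ ^ 2) ^ (1 / 2 : ℝ) :=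
        ENNReal.rpow_le_rpow hsq (by norm_num)
    _ = _ := by
        rw [ENNReal.mul_rpow_of_nonneg _ _ (by norm_num), ← ENNReal.rpow_natCast,
          ← ENNReal.rpow_mul]
        norm_num

theorem memLp (hn : 1 ≤ n) (hf : MemLp f 2 (volume.restrict (Ioo 0 1))) :
    MemLp (hardyTail n f) 2 (volume.restrict (Ioo 0 1)) :=
  ⟨aestronglyMeasurable hf.1,
    (eLpNorm_le hn hf.1).trans_lt (ENNReal.mul_lt_top ENNReal.ofReal_lt_top hf.2)⟩

theorem integrableOn_inv_pow_mul (hf : IntegrableOn f (Ioo 0 1)) {x : ℝ} (hx : 0 < x) :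
    IntegrableOn (fun t ↦ (t ^ n)⁻¹ * f t) (Ioc x 1) := by
  have hf' : IntegrableOn f (Ioc x 1) :=
    (hf.mono_set (Ioo_subset_Ioo_left hx.le)).congr_set_ae Ioo_ae_eq_Ioc.symm
  refine hf'.bdd_mul (c := (x ^ n)⁻¹) (by fun_prop) ?_
  filter_upwards [ae_restrict_mem measurableSet_Ioc] with t ht
  rw [Real.norm_of_nonneg (by have := hx.trans ht.1; positivity)]
  exact inv_anti₀ (by positivity) (pow_le_pow_left₀ hx.le ht.1.le n)

theorem add_ae_eq (hf : IntegrableOn f (Ioo 0 1)) (hg : IntegrableOn g (Ioo 0 1)) :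
    hardyTail n (f + g) =ᵐ[volume.restrict (Ioo 0 1)] hardyTail n f + hardyTail n g := by
  filter_upwards [ae_restrict_mem measurableSet_Ioo] with x hx
  simp only [hardyTail, Pi.add_apply, mul_add,
    integral_add (integrableOn_inv_pow_mul hf hx.1) (integrableOn_inv_pow_mul hg hx.1)]

theorem smul (c : ℝ) (f : ℝ → ℝ) : hardyTail n (c • f) = c • hardyTail n f := by
  ext x
  simp only [hardyTail, Pi.smul_apply, smul_eq_mul, mul_left_comm _ c, integral_const_mul]

end hardyTail

theorem exists_continuousLinearMap_Lp_ae_eq {α β 𝕜 E F : Type*} [MeasurableSpace α]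
    [MeasurableSpace β] {μ : Measure α} {ν : Measure β} [NontriviallyNormedField 𝕜]
    [NormedAddCommGroup E] [NormedSpace 𝕜 E] [NormedAddCommGroup F] [NormedSpace 𝕜 F]
    {p q : ℝ≥0∞} [Fact (1 ≤ p)] [Fact (1 ≤ q)] (Φ : (α → E) → β → F)
    (C : ℝ≥0)
    (congr_ae : ∀ f g, f =ᵐ[μ] g → Φ f =ᵐ[ν] Φ g)
    (map_add : ∀ f g, MemLp f p μ → MemLp g p μ → Φ (f + g) =ᵐ[ν] Φ f + Φ g)
    (map_smul : ∀ (c : 𝕜) f, MemLp f p μ → Φ (c • f) =ᵐ[ν] c • Φ f)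
    (memLp : ∀ f, MemLp f p μ → MemLp (Φ f) q ν)
    (eLpNorm_le : ∀ f, MemLp f p μ → eLpNorm (Φ f) q ν ≤ C * eLpNorm f p μ) :
    ∃ T : Lp E p μ →L[𝕜] Lp F q ν, ∀ f, T f =ᵐ[ν] Φ f := by
  let T : Lp E p μ →ₗ[𝕜] Lp F q ν :=
    { toFun f := (memLp f (Lp.memLp f)).toLp (Φ f)
      map_add' f g := by
        refine Lp.ext ?_
        filter_upwards [(memLp _ (Lp.memLp (f + g))).coeFn_toLp,
          Lp.coeFn_add ((memLp _ (Lp.memLp f)).toLp _) ((memLp _ (Lp.memLp g)).toLp _),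
          (memLp _ (Lp.memLp f)).coeFn_toLp, (memLp _ (Lp.memLp g)).coeFn_toLp,
          congr_ae _ _ (Lp.coeFn_add f g), map_add _ _ (Lp.memLp f) (Lp.memLp g)]
          with x h₀ h₁ h₂ h₃ h₄ h₅
        rw [h₀, h₄, h₅, h₁, Pi.add_apply, Pi.add_apply, h₂, h₃]
      map_smul' c f := by
        refine Lp.ext ?_
        filter_upwards [(memLp _ (Lp.memLp (c • f))).coeFn_toLp,
          Lp.coeFn_smul c ((memLp _ (Lp.memLp f)).toLp _), (memLp _ (Lp.memLp f)).coeFn_toLp,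
          congr_ae _ _ (Lp.coeFn_smul c f), map_smul c _ (Lp.memLp f)]
          with x h₀ h₁ h₂ h₃ h₄
        rw [h₀, h₃, h₄, RingHom.id_apply, h₁, Pi.smul_apply, Pi.smul_apply, h₂] }
  refine ⟨T.mkContinuous C fun f ↦ ?_, fun f ↦ (memLp f (Lp.memLp f)).coeFn_toLp⟩
  calc ‖T f‖ = (eLpNorm (Φ f) q ν).toReal := Lp.norm_toLp _ (memLp f (Lp.memLp f))
    _ ≤ (C * eLpNorm f p μ).toReal :=
        ENNReal.toReal_mono (ENNReal.mul_ne_top ENNReal.coe_ne_top (Lp.eLpNorm_ne_top f))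
          (eLpNorm_le f (Lp.memLp f))
    _ = C * ‖f‖ := by rw [ENNReal.toReal_mul, Lp.norm_def, ENNReal.coe_toReal]

theorem stmt2 (ℓ : ℕ) (hℓ : 1 ≤ ℓ) :
    ∃ T : (Lp ℝ 2 (volume.restrict (Ioo (0:ℝ) 1))) →L[ℝ]
          (Lp ℝ 2 (volume.restrict (Ioo (0:ℝ) 1))),
      ∀ f : Lp ℝ 2 (volume.restrict (Ioo (0:ℝ) 1)),
        ⇑(T f) =ᵐ[volume.restrict (Ioo (0:ℝ) 1)]
          fun x => f x - 4 * ℓ * x ^ (2 * ℓ - 1) * ∫ t in x..1, (t ^ (2 * ℓ))⁻¹ * f t := by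
  have hn : 1 ≤ 2 * ℓ := by omega
  obtain ⟨K, hK⟩ := exists_continuousLinearMap_Lp_ae_eq (𝕜 := ℝ) (hardyTail (2 * ℓ))
    (((2 * ℓ : ℕ) : ℝ) - 1 / 2)⁻¹.toNNReal (fun _ _ ↦ hardyTail.ae_congr)
    (fun _ _ hf hg ↦ hardyTail.add_ae_eq (hf.integrable one_le_two) (hg.integrable one_le_two))
    (fun c f _ ↦ .of_eq (hardyTail.smul c f)) (fun _ ↦ hardyTail.memLp hn)
    (fun _ hf ↦ hardyTail.eLpNorm_le hn hf.1)
  refine ⟨ContinuousLinearMap.id ℝ _ - (4 * ℓ : ℝ) • K, fun f ↦ ?_⟩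
  filter_upwards [Lp.coeFn_sub f ((4 * ℓ : ℝ) • K f), Lp.coeFn_smul (4 * ℓ : ℝ) (K f),
    hK f, ae_restrict_mem measurableSet_Ioo] with x h₁ h₂ h₃ hx
  simp only [sub_apply, ContinuousLinearMap.id_apply, smul_apply] at h₁ ⊢
  rw [h₁, Pi.sub_apply, h₂, Pi.smul_apply, h₃, hardyTail,
    intervalIntegral.integral_of_le hx.2.le, smul_eq_mul]
  ring
end

section
/- For each integer ℓ ≥ 1, the Hilbert adjoint of the operator S_ℓ[f](x) = f(x) - 4ℓ x^{2ℓ-1} ∫ₓ¹ t^{-2ℓ} f(t) dt on L²(0,1) is given by S_ℓ*[g](x) = g(x) - (4ℓ/x^{2ℓ}) ∫₀ˣ t^{2ℓ-1} g(t) dt. -/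
/-!
Write `T = I - V`, where `V` is the integral operator with kernel
`K(x, t) = 4ℓ x^(2ℓ-1) t^(-2ℓ)` for `x < t` and `0` otherwise; the claim is that `V*` is the
integral operator with the transposed kernel. The rows of `K` have uniformly bounded integrals,
`∫ K(x, t) dt = 4ℓ (1 - x^(2ℓ-1)) / (2ℓ-1) ≤ 4ℓ`, so `g(x) K(x, t) h(t)` is integrable on the
square whenever `g ∈ L¹` and `h` is bounded. Fubini then gives `∫_s V* g = ⟨V 1_s, g⟩ = ∫_s Vᵀ g`
for every measurable `s`, which determines `V* g`. Identifying `V* g` through its set integrals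
only needs `Vᵀ g ∈ L¹`, so no Hardy-type `L²` bound for the transposed operator is required.
-/

open MeasureTheory Set

section KernelOperator

variable {α β : Type*} [MeasurableSpace α] [MeasurableSpace β] {μ : Measure α} {ν : Measure β}
  [SFinite ν] {K : α → β → ℝ} {C : ℝ}

theorem integrable_mul_kernel_mul (hK : AEStronglyMeasurable (Function.uncurry K) (μ.prod ν))
    (hKi : ∀ᵐ x ∂μ, Integrable (K x) ν) (hKC : ∀ᵐ x ∂μ, ∫ t, ‖K x t‖ ∂ν ≤ C)
    {G : α → ℝ} (hG : Integrable G μ) {h : β → ℝ} (hh : AEStronglyMeasurable h ν)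
    (hh1 : ∀ᵐ t ∂ν, ‖h t‖ ≤ 1) :
    Integrable (fun p : α × β => G p.1 * K p.1 p.2 * h p.2) (μ.prod ν) := by
  have hmeas : AEStronglyMeasurable (fun p : α × β => G p.1 * K p.1 p.2 * h p.2) (μ.prod ν) :=
    (hG.aestronglyMeasurable.comp_fst.mul hK).mul hh.comp_snd
  refine (integrable_prod_iff hmeas).2 ⟨?_, ?_⟩
  · filter_upwards [hKi] with x hx
    exact (hx.const_mul (G x)).mul_bdd hh hh1
  · refine Integrable.mono' (hG.norm.mul_const C) hmeas.norm.integral_prod_right' ?_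
    filter_upwards [hKi, hKC] with x hxi hxC
    calc ‖∫ t, ‖G x * K x t * h t‖ ∂ν‖ = ∫ t, ‖G x * K x t * h t‖ ∂ν :=
          Real.norm_of_nonneg (integral_nonneg fun _ => norm_nonneg _)
      _ ≤ ∫ t, ‖G x‖ * ‖K x t‖ ∂ν := by
          refine integral_mono_of_nonneg (ae_of_all _ fun _ => norm_nonneg _)
            (hxi.norm.const_mul _) ?_
          filter_upwards [hh1] with t ht
          rw [norm_mul, norm_mul]
          exact mul_le_of_le_one_right (by positivity) ht
      _ = ‖G x‖ * ∫ t, ‖K x t‖ ∂ν := integral_const_mul _ _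
      _ ≤ ‖G x‖ * C := by gcongr

variable [SFinite μ]

theorem integral_mul_integral_kernel_swap
    (hK : AEStronglyMeasurable (Function.uncurry K) (μ.prod ν))
    (hKi : ∀ᵐ x ∂μ, Integrable (K x) ν) (hKC : ∀ᵐ x ∂μ, ∫ t, ‖K x t‖ ∂ν ≤ C)
    {G : α → ℝ} (hG : Integrable G μ) {h : β → ℝ} (hh : AEStronglyMeasurable h ν)
    (hh1 : ∀ᵐ t ∂ν, ‖h t‖ ≤ 1) :
    ∫ x, G x * ∫ t, K x t * h t ∂ν ∂μ = ∫ t, (∫ x, K x t * G x ∂μ) * h t ∂ν := by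
  have := integral_integral_swap (f := fun x t => G x * K x t * h t)
    (integrable_mul_kernel_mul hK hKi hKC hG hh hh1)
  simpa only [Function.uncurry_apply_pair, mul_assoc, integral_const_mul, ← integral_mul_const,
    mul_comm (G _)] using this

theorem integrable_integral_kernel_mul
    (hK : AEStronglyMeasurable (Function.uncurry K) (μ.prod ν))
    (hKi : ∀ᵐ x ∂μ, Integrable (K x) ν) (hKC : ∀ᵐ x ∂μ, ∫ t, ‖K x t‖ ∂ν ≤ C)
    {G : α → ℝ} (hG : Integrable G μ) :
    Integrable (fun t => ∫ x, K x t * G x ∂μ) ν := by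
  simpa [mul_comm (G _)] using (integrable_mul_kernel_mul hK hKi hKC hG (h := fun _ => 1)
    aestronglyMeasurable_const (by simp)).integral_prod_right

end KernelOperator

section Adjoint

variable {α : Type*} [MeasurableSpace α] {μ : Measure α} [IsFiniteMeasure μ] {K : α → α → ℝ}
  {C : ℝ}

theorem adjoint_ae_eq_integral_kernel (hK : AEStronglyMeasurable (Function.uncurry K) (μ.prod μ))
    (hKi : ∀ᵐ x ∂μ, Integrable (K x) μ) (hKC : ∀ᵐ x ∂μ, ∫ t, ‖K x t‖ ∂μ ≤ C)
    (V : Lp ℝ 2 μ →L[ℝ] Lp ℝ 2 μ) (hV : ∀ f, V f =ᵐ[μ] fun x => ∫ t, K x t * f t ∂μ)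
    (g : Lp ℝ 2 μ) :
    ContinuousLinearMap.adjoint V g =ᵐ[μ] fun t => ∫ x, K x t * g x ∂μ := by
  have hL1 (f : Lp ℝ 2 μ) : Integrable f μ := (Lp.memLp f).integrable one_le_two
  refine ae_eq_of_forall_setIntegral_eq_of_sigmaFinite (fun s _ _ => (hL1 _).integrableOn)
    (fun s _ _ => (integrable_integral_kernel_mul hK hKi hKC (hL1 g)).integrableOn)
    fun s hs hμs => ?_
  have h1s : AEStronglyMeasurable (s.indicator fun _ => (1 : ℝ)) μ :=
    (measurable_const.indicator hs).aestronglyMeasurable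
  have h1s_le : ∀ᵐ t ∂μ, ‖s.indicator (fun _ => (1 : ℝ)) t‖ ≤ 1 :=
    ae_of_all _ fun t => by by_cases ht : t ∈ s <;> simp [ht]
  calc ∫ t in s, ContinuousLinearMap.adjoint V g t ∂μ
      = inner ℝ (V (indicatorConstLp 2 hs hμs.ne 1)) g := by
        rw [← ContinuousLinearMap.adjoint_inner_right, L2.inner_indicatorConstLp_one]
    _ = ∫ x, g x * ∫ t, K x t * s.indicator (fun _ => 1) t ∂μ ∂μ := by
        rw [L2.inner_def]
        refine integral_congr_ae ?_
        filter_upwards [hV (indicatorConstLp 2 hs hμs.ne 1)] with x hx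
        rw [hx, RCLike.inner_apply, conj_trivial]
        congr 1
        refine integral_congr_ae ?_
        filter_upwards [indicatorConstLp_coeFn (hs := hs) (hμs := hμs.ne) (c := (1 : ℝ))] with t ht
        rw [ht]
    _ = ∫ t, (∫ x, K x t * g x ∂μ) * s.indicator (fun _ => 1) t ∂μ :=
        integral_mul_integral_kernel_swap hK hKi hKC (hL1 g) h1s h1s_le
    _ = ∫ t in s, ∫ x, K x t * g x ∂μ ∂μ := by
        rw [← integral_indicator hs]
        congr 1
        ext t
        by_cases ht : t ∈ s <;> simp [ht]

theorem adjoint_ae_eq_sub_integral_kernel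
    (hK : AEStronglyMeasurable (Function.uncurry K) (μ.prod μ))
    (hKi : ∀ᵐ x ∂μ, Integrable (K x) μ) (hKC : ∀ᵐ x ∂μ, ∫ t, ‖K x t‖ ∂μ ≤ C)
    (T : Lp ℝ 2 μ →L[ℝ] Lp ℝ 2 μ) (hT : ∀ f, T f =ᵐ[μ] fun x => f x - ∫ t, K x t * f t ∂μ)
    (g : Lp ℝ 2 μ) :
    ContinuousLinearMap.adjoint T g =ᵐ[μ] fun t => g t - ∫ x, K x t * g x ∂μ := by
  set V := ContinuousLinearMap.id ℝ (Lp ℝ 2 μ) - T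
  have hV (f : Lp ℝ 2 μ) : V f =ᵐ[μ] fun x => ∫ t, K x t * f t ∂μ := by
    filter_upwards [Lp.coeFn_sub f (T f), hT f] with x hx hTx
    rw [sub_apply, ContinuousLinearMap.id_apply, hx, Pi.sub_apply, hTx, sub_sub_cancel]
  have hadj : ContinuousLinearMap.adjoint T g = g - ContinuousLinearMap.adjoint V g := by
    simp [V, map_sub, ContinuousLinearMap.adjoint_id]
  filter_upwards [adjoint_ae_eq_integral_kernel hK hKi hKC _ hV g, hadj ▸ Lp.coeFn_sub _ _]
    with t ht hsub
  rw [hsub, Pi.sub_apply, ht]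

end Adjoint

theorem restrict_Ioo_restrict_Ioi {μ : Measure ℝ} {a b x : ℝ} (hax : a ≤ x) :
    (μ.restrict (Ioo a b)).restrict (Ioi x) = μ.restrict (Ioo x b) := by
  rw [Measure.restrict_restrict measurableSet_Ioi, Ioi_inter_Ioo, max_eq_left hax]

theorem restrict_Ioo_restrict_Iio {μ : Measure ℝ} {a b x : ℝ} (hxb : x ≤ b) :
    (μ.restrict (Ioo a b)).restrict (Iio x) = μ.restrict (Ioo a x) := by
  rw [Measure.restrict_restrict measurableSet_Iio, Iio_inter_Ioo, min_eq_left hxb]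

theorem integral_indicator_Ioi_restrict_Ioo {a b x : ℝ} (hax : a ≤ x) (hxb : x ≤ b) (F : ℝ → ℝ) :
    ∫ t, (Ioi x).indicator F t ∂(volume.restrict (Ioo a b)) = ∫ t in x..b, F t := by
  rw [integral_indicator measurableSet_Ioi, restrict_Ioo_restrict_Ioi hax,
    intervalIntegral.integral_of_le hxb, integral_Ioc_eq_integral_Ioo]

theorem integral_indicator_Iio_restrict_Ioo {a b x : ℝ} (hax : a ≤ x) (hxb : x ≤ b) (F : ℝ → ℝ) :
    ∫ t, (Iio x).indicator F t ∂(volume.restrict (Ioo a b)) = ∫ t in a..x, F t := by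
  rw [integral_indicator measurableSet_Iio, restrict_Ioo_restrict_Iio hxb,
    intervalIntegral.integral_of_le hax, integral_Ioc_eq_integral_Ioo]

theorem pow_sub_one_mul_integral_inv_pow_le {n : ℕ} (hn : 2 ≤ n) {x : ℝ} (hx0 : 0 < x)
    (hx1 : x ≤ 1) : x ^ (n - 1) * ∫ t in x..1, (t ^ n)⁻¹ ≤ 1 := by
  obtain ⟨m, rfl⟩ : ∃ m, n = m + 1 := ⟨n - 1, by omega⟩
  have hm : (1 : ℝ) ≤ m := by exact_mod_cast (by omega : 1 ≤ m)
  have h0 : (0 : ℝ) ∉ uIcc x 1 := by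
    rw [uIcc_of_le hx1]; exact fun h => hx0.not_ge h.1
  have key : x ^ m * ∫ t in x..1, (t ^ (m + 1))⁻¹ = (1 - x ^ m) / m := by
    simp_rw [← zpow_natCast, ← zpow_neg]
    rw [integral_zpow (.inr ⟨by omega, h0⟩), show -((m + 1 : ℕ) : ℤ) + 1 = -m by push_cast; ring]
    have hm0 : (m : ℝ) ≠ 0 := by linarith
    simp only [zpow_neg, zpow_natCast]
    push_cast
    rw [show -((m : ℝ) + 1) + 1 = -m by ring]
    field_simp
    ring
  rw [Nat.add_sub_cancel, key, div_le_one (by linarith)]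
  have : 0 ≤ x ^ m := by positivity
  linarith

noncomputable def rundellSacksKernel (ℓ : ℕ) (x t : ℝ) : ℝ :=
  if x < t then 4 * ℓ * x ^ (2 * ℓ - 1) / t ^ (2 * ℓ) else 0

namespace rundellSacksKernel

variable {ℓ : ℕ}

theorem eq_indicator_Ioi (x : ℝ) :
    rundellSacksKernel ℓ x = (Ioi x).indicator fun t => 4 * ℓ * x ^ (2 * ℓ - 1) / t ^ (2 * ℓ) := by
  ext t; simp [rundellSacksKernel, indicator_apply]

theorem measurable_uncurry : Measurable (Function.uncurry (rundellSacksKernel ℓ)) :=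
  Measurable.ite (measurableSet_lt measurable_fst measurable_snd) (by fun_prop) measurable_const

theorem integral_snd_mul {x : ℝ} (hx0 : 0 ≤ x) (hx1 : x ≤ 1) (f : ℝ → ℝ) :
    ∫ t, rundellSacksKernel ℓ x t * f t ∂(volume.restrict (Ioo 0 1)) =
      4 * ℓ * x ^ (2 * ℓ - 1) * ∫ t in x..1, (t ^ (2 * ℓ))⁻¹ * f t := by
  have : (fun t => rundellSacksKernel ℓ x t * f t) =
      (Ioi x).indicator fun t => 4 * ℓ * x ^ (2 * ℓ - 1) * ((t ^ (2 * ℓ))⁻¹ * f t) := by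
    ext t
    by_cases ht : x < t <;> simp [ht, rundellSacksKernel]
    ring
  rw [this, integral_indicator_Ioi_restrict_Ioo hx0 hx1, intervalIntegral.integral_const_mul]

theorem integral_fst_mul {t : ℝ} (ht0 : 0 ≤ t) (ht1 : t ≤ 1) (g : ℝ → ℝ) :
    ∫ x, rundellSacksKernel ℓ x t * g x ∂(volume.restrict (Ioo 0 1)) =
      4 * ℓ / t ^ (2 * ℓ) * ∫ x in 0..t, x ^ (2 * ℓ - 1) * g x := by
  have : (fun x => rundellSacksKernel ℓ x t * g x) =
      (Iio t).indicator fun x => 4 * ℓ / t ^ (2 * ℓ) * (x ^ (2 * ℓ - 1) * g x) := by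
    ext x
    by_cases hx : x < t <;> simp [hx, rundellSacksKernel]
    ring
  rw [this, integral_indicator_Iio_restrict_Ioo ht0 ht1, intervalIntegral.integral_const_mul]

theorem integrable {x : ℝ} (hx : 0 < x) :
    Integrable (rundellSacksKernel ℓ x) (volume.restrict (Ioo 0 1)) := by
  rw [eq_indicator_Ioi, integrable_indicator_iff measurableSet_Ioi, IntegrableOn,
    restrict_Ioo_restrict_Ioi hx.le]
  refine (ContinuousOn.integrableOn_Icc ?_).mono_set Ioo_subset_Icc_self
  exact continuousOn_const.div (continuousOn_pow _) fun t ht => pow_ne_zero _ (hx.trans_le ht.1).ne'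

theorem integral_norm_le (hℓ : 1 ≤ ℓ) {x : ℝ} (hx0 : 0 < x) (hx1 : x ≤ 1) :
    ∫ t, ‖rundellSacksKernel ℓ x t‖ ∂(volume.restrict (Ioo 0 1)) ≤ 4 * ℓ := by
  have hnonneg (t : ℝ) : 0 ≤ rundellSacksKernel ℓ x t := by
    unfold rundellSacksKernel; split_ifs with h
    · have := hx0.trans h; positivity
    · rfl
  simp_rw [Real.norm_of_nonneg (hnonneg _)]
  calc ∫ t, rundellSacksKernel ℓ x t ∂(volume.restrict (Ioo 0 1))
      = 4 * ℓ * (x ^ (2 * ℓ - 1) * ∫ t in x..1, (t ^ (2 * ℓ))⁻¹) := by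
        simpa [mul_assoc] using integral_snd_mul hx0.le hx1 fun _ => 1
    _ ≤ 4 * ℓ * 1 := by
        gcongr; exact pow_sub_one_mul_integral_inv_pow_le (by omega) hx0 hx1
    _ = 4 * ℓ := mul_one _

end rundellSacksKernel

theorem stmt3 (ℓ : ℕ) (hℓ : 1 ≤ ℓ)
    (T : (Lp ℝ 2 (volume.restrict (Ioo (0:ℝ) 1))) →L[ℝ]
         (Lp ℝ 2 (volume.restrict (Ioo (0:ℝ) 1))))
    (hT : ∀ f : Lp ℝ 2 (volume.restrict (Ioo (0:ℝ) 1)),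
      ⇑(T f) =ᵐ[volume.restrict (Ioo (0:ℝ) 1)]
        fun x => f x - 4 * ℓ * x ^ (2 * ℓ - 1) * ∫ t in x..1, (t ^ (2 * ℓ))⁻¹ * f t) :
    ∀ g : Lp ℝ 2 (volume.restrict (Ioo (0:ℝ) 1)),
      ⇑((ContinuousLinearMap.adjoint T) g) =ᵐ[volume.restrict (Ioo (0:ℝ) 1)]
        fun x => g x - (4 * ℓ / x ^ (2 * ℓ)) * ∫ t in (0:ℝ)..x, t ^ (2 * ℓ - 1) * g t := by
  intro g
  have hIoo : ∀ᵐ x ∂(volume.restrict (Ioo (0:ℝ) 1)), x ∈ Ioo (0:ℝ) 1 :=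
    ae_restrict_mem measurableSet_Ioo
  have hT' (f : Lp ℝ 2 (volume.restrict (Ioo (0:ℝ) 1))) :
      ⇑(T f) =ᵐ[volume.restrict (Ioo (0:ℝ) 1)]
        fun x => f x - ∫ t, rundellSacksKernel ℓ x t * f t ∂(volume.restrict (Ioo 0 1)) := by
    filter_upwards [hT f, hIoo] with x hx hx01
    rw [hx, rundellSacksKernel.integral_snd_mul hx01.1.le hx01.2.le]
  filter_upwards [adjoint_ae_eq_sub_integral_kernel
      rundellSacksKernel.measurable_uncurry.aestronglyMeasurable
      (hIoo.mono fun x hx => rundellSacksKernel.integrable hx.1)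
      (hIoo.mono fun x hx => rundellSacksKernel.integral_norm_le hℓ hx.1 hx.2.le) T hT' g,
    hIoo] with x hx hx01
  rw [hx, rundellSacksKernel.integral_fst_mul hx01.1.le hx01.2.le]
end

section
/- For integers ℓ, m ≥ 1, the index-reduction operators S_ℓ and S_m commute: S_ℓ S_m = S_m S_ℓ as operators on L²(0,1). -/
/-!
Write `S_k = 1 - 4k V_k` with `V_k f(x) = x^(2k-1) ∫ₓ¹ t^(-2k) f(t) dt`. Exchanging the order of
integration in `V_ℓ V_m f` over the triangle `x < t < s < 1` and integrating `t^(2m-2ℓ-1)`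
explicitly gives the resolvent-type identity `(2m - 2ℓ) V_ℓ V_m = V_ℓ - V_m` for `ℓ ≠ m`.
Its right-hand side changes sign together with `2m - 2ℓ` when `ℓ` and `m` are swapped, so
`V_ℓ` and `V_m` commute, and therefore so do `S_ℓ` and `S_m`. For `x ∈ (0, 1)`, `V_k f(x)` only
depends on the class of `f` in `L²(0,1)`, which transfers the pointwise identity to the operators.
-/

open MeasureTheory Set intervalIntegral

theorem integral_mul_integral_triangle_swap {w h : ℝ → ℝ} {a b : ℝ} (hab : a ≤ b)
    (hw : IntervalIntegrable w volume a b) (hh : IntervalIntegrable h volume a b) :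
    ∫ t in a..b, w t * ∫ s in t..b, h s = ∫ s in a..b, (∫ t in a..s, w t) * h s := by
  rw [intervalIntegrable_iff_integrableOn_Ioc_of_le hab] at hw hh
  set F : ℝ × ℝ → ℝ := {p | p.1 < p.2}.indicator fun p => w p.1 * h p.2
  have hF : Integrable F ((volume.restrict (Ioc a b)).prod (volume.restrict (Ioc a b))) :=
    (hw.mul_prod hh).indicator (measurableSet_lt measurable_fst measurable_snd)
  have hF_left : ∀ t s, F (t, s) = (Ioi t).indicator (fun s => w t * h s) s := fun t s => by
    by_cases hts : t < s <;> simp [F, indicator, hts]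
  have hF_right : ∀ t s, F (t, s) = (Iio s).indicator (fun t => w t * h s) t := fun t s => by
    by_cases hts : t < s <;> simp [F, indicator, hts]
  calc ∫ t in a..b, w t * ∫ s in t..b, h s
      = ∫ t in Ioc a b, ∫ s in Ioc a b, F (t, s) := by
        rw [integral_of_le hab]
        refine setIntegral_congr_fun measurableSet_Ioc fun t ht => ?_
        rw [integral_of_le ht.2]
        simp only [hF_left, setIntegral_indicator measurableSet_Ioi, Ioc_inter_Ioi,
          max_eq_right ht.1.le, MeasureTheory.integral_const_mul]
    _ = ∫ s in Ioc a b, ∫ t in Ioc a b, F (t, s) := integral_integral_swap hF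
    _ = ∫ s in a..b, (∫ t in a..s, w t) * h s := by
        rw [integral_of_le hab]
        refine setIntegral_congr_fun measurableSet_Ioc fun s hs => ?_
        have : Ioc a b ∩ Iio s = Ioo a s := by
          ext t; simp only [mem_inter_iff, mem_Ioc, mem_Iio, mem_Ioo]
          constructor
          · rintro ⟨⟨hat, -⟩, hts⟩; exact ⟨hat, hts⟩
          · rintro ⟨hat, hts⟩; exact ⟨⟨hat, hts.le.trans hs.2⟩, hts⟩
        simp only [hF_right, setIntegral_indicator measurableSet_Iio, this,
          MeasureTheory.integral_mul_const, integral_of_le hs.1.le, integral_Ioc_eq_integral_Ioo]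

theorem pow_mul_inv_pow_eq_zpow {t : ℝ} (ht : t ≠ 0) (a b : ℕ) :
    t ^ a * (t ^ b)⁻¹ = t ^ ((a : ℤ) - b) := by
  rw [zpow_sub₀ ht, zpow_natCast, zpow_natCast, div_eq_mul_inv]

theorem integral_pow_mul_inv_pow {ℓ m : ℕ} (hm : 1 ≤ m) (hne : ℓ ≠ m) {x s : ℝ}
    (hx : 0 < x) (hs : 0 < s) :
    ∫ t in x..s, t ^ (2 * m - 1) * (t ^ (2 * ℓ))⁻¹
      = (s ^ (2 * m) * (s ^ (2 * ℓ))⁻¹ - x ^ (2 * m) * (x ^ (2 * ℓ))⁻¹) / (2 * m - 2 * ℓ) := by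
  have h0 : (0 : ℝ) ∉ uIcc x s := fun h => (lt_min hx hs).not_ge h.1
  have hexp : ((2 * m - 1 : ℕ) : ℤ) - (2 * ℓ : ℕ) = ((2 * m : ℕ) : ℤ) - (2 * ℓ : ℕ) - 1 := by
    omega
  rw [integral_congr fun t ht => pow_mul_inv_pow_eq_zpow (ne_of_mem_of_not_mem ht h0) _ _,
    hexp, integral_zpow (Or.inr ⟨by omega, h0⟩), sub_add_cancel,
    pow_mul_inv_pow_eq_zpow hs.ne', pow_mul_inv_pow_eq_zpow hx.ne']
  push_cast
  ring

theorem IntervalIntegrable.inv_pow_mul {f : ℝ → ℝ} {x y : ℝ} (hx : 0 < x) (hy : 0 < y) (n : ℕ)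
    (hf : IntervalIntegrable f volume x y) :
    IntervalIntegrable (fun t => (t ^ n)⁻¹ * f t) volume x y :=
  hf.continuousOn_mul <| (continuousOn_pow n).inv₀ fun _ ht =>
    pow_ne_zero n (lt_min hx hy |>.trans_le ht.1).ne'

namespace RundellSacks

noncomputable def volterra (k : ℕ) (f : ℝ → ℝ) (x : ℝ) : ℝ :=
  x ^ (2 * k - 1) * ∫ t in x..1, (t ^ (2 * k))⁻¹ * f t

noncomputable def indexReduction (k : ℕ) (f : ℝ → ℝ) (x : ℝ) : ℝ :=
  f x - 4 * k * x ^ (2 * k - 1) * ∫ t in x..1, (t ^ (2 * k))⁻¹ * f t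

variable {f : ℝ → ℝ} {x : ℝ}

theorem indexReduction_eq (k : ℕ) (f : ℝ → ℝ) (x : ℝ) :
    indexReduction k f x = f x - 4 * k * volterra k f x := by
  simp only [indexReduction, volterra, mul_assoc]

theorem continuousOn_volterra (k : ℕ) (hx : 0 < x) (hf : IntervalIntegrable f volume x 1) :
    ContinuousOn (volterra k f) (uIcc x 1) :=
  (continuousOn_pow _).mul <| continuousOn_primitive_interval_left <|
    (intervalIntegrable_iff' (μ := volume)).1 (hf.inv_pow_mul hx one_pos _)

theorem volterra_indexReduction (ℓ m : ℕ) (hx : 0 < x) (hf : IntervalIntegrable f volume x 1) :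
    volterra ℓ (indexReduction m f) x = volterra ℓ f x - 4 * m * volterra ℓ (volterra m f) x := by
  have hV : IntervalIntegrable (fun t => (t ^ (2 * ℓ))⁻¹ * volterra m f t) volume x 1 :=
    (continuousOn_volterra m hx hf).intervalIntegrable.inv_pow_mul hx one_pos _
  have hsplit : ∀ t, (t ^ (2 * ℓ))⁻¹ * indexReduction m f t
      = (t ^ (2 * ℓ))⁻¹ * f t - 4 * m * ((t ^ (2 * ℓ))⁻¹ * volterra m f t) := fun t => by
    rw [indexReduction_eq]; ring
  rw [volterra, volterra, volterra]
  simp only [hsplit]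
  rw [integral_sub (hf.inv_pow_mul hx one_pos _) (hV.const_mul _),
    intervalIntegral.integral_const_mul]
  ring

theorem volterra_volterra {ℓ m : ℕ} (hℓ : 1 ≤ ℓ) (hm : 1 ≤ m) (hne : ℓ ≠ m) (hx : 0 < x)
    (hx1 : x ≤ 1) (hf : IntervalIntegrable f volume x 1) :
    volterra ℓ (volterra m f) x = (volterra ℓ f x - volterra m f x) / (2 * m - 2 * ℓ) := by
  have hxs : ∀ s ∈ uIcc x 1, 0 < s := fun s hs => lt_min hx one_pos |>.trans_le hs.1
  have hw : IntervalIntegrable (fun t : ℝ => t ^ (2 * m - 1) * (t ^ (2 * ℓ))⁻¹) volume x 1 :=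
    ContinuousOn.intervalIntegrable <| (continuousOn_pow _).mul <|
      (continuousOn_pow _).inv₀ fun t ht => pow_ne_zero _ (hxs t ht).ne'
  have hpow : x ^ (2 * ℓ - 1) * (x ^ (2 * m) * (x ^ (2 * ℓ))⁻¹) = x ^ (2 * m - 1) := by
    rw [← mul_assoc, ← pow_add, show 2 * ℓ - 1 + 2 * m = 2 * m - 1 + 2 * ℓ by omega, pow_add,
      mul_inv_cancel_right₀ (pow_ne_zero _ hx.ne')]
  have hinner : ∀ s ∈ uIcc x 1,
      (∫ t in x..s, t ^ (2 * m - 1) * (t ^ (2 * ℓ))⁻¹) * ((s ^ (2 * m))⁻¹ * f s)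
        = ((s ^ (2 * ℓ))⁻¹ * f s - x ^ (2 * m) * (x ^ (2 * ℓ))⁻¹ * ((s ^ (2 * m))⁻¹ * f s))
          / (2 * m - 2 * ℓ) := fun s hs => by
    have hs0 := (hxs s hs).ne'
    rw [integral_pow_mul_inv_pow hm hne hx (hxs s hs)]
    field_simp
  rw [volterra, volterra, volterra]
  calc x ^ (2 * ℓ - 1) * ∫ t in x..1, (t ^ (2 * ℓ))⁻¹ * volterra m f t
      = x ^ (2 * ℓ - 1) * ∫ t in x..1, (t ^ (2 * m - 1) * (t ^ (2 * ℓ))⁻¹) *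
          ∫ s in t..1, (s ^ (2 * m))⁻¹ * f s := by
        congr 1
        refine integral_congr fun t _ => ?_
        rw [volterra]
        ring
    _ = x ^ (2 * ℓ - 1) * ∫ s in x..1, ((s ^ (2 * ℓ))⁻¹ * f s
          - x ^ (2 * m) * (x ^ (2 * ℓ))⁻¹ * ((s ^ (2 * m))⁻¹ * f s)) / (2 * m - 2 * ℓ) := by
        rw [integral_mul_integral_triangle_swap hx1 hw (hf.inv_pow_mul hx one_pos _),
          integral_congr hinner]
    _ = _ := by
        rw [intervalIntegral.integral_div, integral_sub (hf.inv_pow_mul hx one_pos _)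
          ((hf.inv_pow_mul hx one_pos _).const_mul _), intervalIntegral.integral_const_mul]
        linear_combination -(∫ s in x..1, (s ^ (2 * m))⁻¹ * f s) * hpow / (2 * m - 2 * ℓ)

theorem volterra_comm {ℓ m : ℕ} (hℓ : 1 ≤ ℓ) (hm : 1 ≤ m) (hx : 0 < x) (hx1 : x ≤ 1)
    (hf : IntervalIntegrable f volume x 1) :
    volterra ℓ (volterra m f) x = volterra m (volterra ℓ f) x := by
  rcases eq_or_ne ℓ m with rfl | hne
  · rfl
  rw [volterra_volterra hℓ hm hne hx hx1 hf, volterra_volterra hm hℓ hne.symm hx hx1 hf,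
    ← neg_sub, ← neg_sub (2 * (ℓ : ℝ)), neg_div_neg_eq]

theorem indexReduction_comm {ℓ m : ℕ} (hℓ : 1 ≤ ℓ) (hm : 1 ≤ m) (hx : 0 < x) (hx1 : x ≤ 1)
    (hf : IntervalIntegrable f volume x 1) :
    indexReduction ℓ (indexReduction m f) x = indexReduction m (indexReduction ℓ f) x := by
  simp only [indexReduction_eq _ (indexReduction _ f), volterra_indexReduction _ _ hx hf,
    indexReduction_eq _ f, volterra_comm hℓ hm hx hx1 hf]
  ring

theorem volterra_congr_ae {g : ℝ → ℝ} (k : ℕ) (hfg : f =ᵐ[volume.restrict (Ioo 0 1)] g)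
    (hx : 0 ≤ x) (hx1 : x ≤ 1) : volterra k f x = volterra k g x := by
  have h1 : ∀ᵐ t ∂volume, t ≠ (1 : ℝ) := by simp [ae_iff, measure_singleton]
  rw [volterra, volterra, intervalIntegral.integral_congr_ae]
  filter_upwards [ae_restrict_iff' measurableSet_Ioo |>.1 hfg, h1] with t hft ht1 ht
  rw [uIoc_of_le hx1] at ht
  rw [hft ⟨hx.trans_lt ht.1, ht.2.lt_of_ne ht1⟩]

theorem indexReduction_congr_ae {g : ℝ → ℝ} (k : ℕ) (hfg : f =ᵐ[volume.restrict (Ioo 0 1)] g) :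
    indexReduction k f =ᵐ[volume.restrict (Ioo 0 1)] indexReduction k g := by
  filter_upwards [hfg, ae_restrict_mem measurableSet_Ioo] with x hfgx hx
  rw [indexReduction_eq, indexReduction_eq, hfgx, volterra_congr_ae k hfg hx.1.le hx.2.le]

end RundellSacks

open RundellSacks

theorem stmt4 (ℓ m : ℕ) (hℓ : 1 ≤ ℓ) (hm : 1 ≤ m)
    (Tℓ Tm : (Lp ℝ 2 (volume.restrict (Ioo (0:ℝ) 1))) →L[ℝ]
             (Lp ℝ 2 (volume.restrict (Ioo (0:ℝ) 1))))
    (hTℓ : ∀ f : Lp ℝ 2 (volume.restrict (Ioo (0:ℝ) 1)),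
      ⇑(Tℓ f) =ᵐ[volume.restrict (Ioo (0:ℝ) 1)]
        fun x => f x - 4 * ℓ * x ^ (2 * ℓ - 1) * ∫ t in x..1, (t ^ (2 * ℓ))⁻¹ * f t)
    (hTm : ∀ f : Lp ℝ 2 (volume.restrict (Ioo (0:ℝ) 1)),
      ⇑(Tm f) =ᵐ[volume.restrict (Ioo (0:ℝ) 1)]
        fun x => f x - 4 * m * x ^ (2 * m - 1) * ∫ t in x..1, (t ^ (2 * m))⁻¹ * f t) :
    Tℓ.comp Tm = Tm.comp Tℓ := by
  refine ContinuousLinearMap.ext fun f => Lp.ext ?_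
  have hf : IntervalIntegrable f volume 0 1 :=
    (intervalIntegrable_iff_integrableOn_Ioo_of_le zero_le_one).2 <|
      (Lp.memLp f).integrable one_le_two
  calc ⇑(Tℓ (Tm f)) =ᵐ[volume.restrict (Ioo 0 1)] indexReduction ℓ (Tm f) := hTℓ _
    _ =ᵐ[volume.restrict (Ioo 0 1)] indexReduction ℓ (indexReduction m f) :=
      indexReduction_congr_ae ℓ (hTm f)
    _ =ᵐ[volume.restrict (Ioo 0 1)] indexReduction m (indexReduction ℓ f) :=
      ae_restrict_of_forall_mem measurableSet_Ioo fun x hx =>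
        indexReduction_comm hℓ hm hx.1 hx.2.le (hf.mono_set (uIcc_subset_uIcc (by simp [hx.1.le, hx.2.le]) (by simp)))
    _ =ᵐ[volume.restrict (Ioo 0 1)] indexReduction m (Tℓ f) :=
      (indexReduction_congr_ae m (hTℓ f)).symm
    _ =ᵐ[volume.restrict (Ioo 0 1)] Tm (Tℓ f) := (hTm _).symm
end

section
/- Let ℓ ≥ 1 and let f ∈ L²(0,1) be smooth on (0,1), and set g = S_ℓ[f]. Then f^{(2ℓ)}(x) + (4ℓ/x) f^{(2ℓ-1)}(x) = g^{(2ℓ)}(x) for x ∈ (0,1). -/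
open MeasureTheory Set
open scoped ContDiff

private lemma aux_leibniz (w : ℝ → ℝ) (hw : ContDiffOn ℝ ∞ w (Ioo (0:ℝ) 1)) (k : ℕ) :
    ∀ x ∈ Ioo (0:ℝ) 1,
      iteratedDerivWithin k (fun y => y * derivWithin w (Ioo (0:ℝ) 1) y) (Ioo (0:ℝ) 1) x
        = x * iteratedDerivWithin (k + 1) w (Ioo (0:ℝ) 1) x
          + k * iteratedDerivWithin k w (Ioo (0:ℝ) 1) x := by
  have hu : UniqueDiffOn ℝ (Ioo (0:ℝ) 1) := isOpen_Ioo.uniqueDiffOn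
  induction k with
  | zero =>
    intro x hx
    simp [iteratedDerivWithin_one]
  | succ k IH =>
    intro x hx
    have hux := hu x hx
    have hlt : ∀ j : ℕ, (j : WithTop ℕ∞) < ∞ := by
      intro j
      exact_mod_cast WithTop.coe_lt_coe.2 (WithTop.coe_lt_top j)
    have hWd : DifferentiableWithinAt ℝ (iteratedDerivWithin (k+1) w (Ioo (0:ℝ) 1))
        (Ioo (0:ℝ) 1) x :=
      (hw.differentiableOn_iteratedDerivWithin (hlt (k+1)) hu) x hx
    have hVd : DifferentiableWithinAt ℝ (iteratedDerivWithin k w (Ioo (0:ℝ) 1))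
        (Ioo (0:ℝ) 1) x :=
      (hw.differentiableOn_iteratedDerivWithin (hlt k) hu) x hx
    have hW' : HasDerivWithinAt (iteratedDerivWithin (k+1) w (Ioo (0:ℝ) 1))
        (iteratedDerivWithin (k+2) w (Ioo (0:ℝ) 1) x) (Ioo (0:ℝ) 1) x := by
      have := hWd.hasDerivWithinAt
      rwa [← iteratedDerivWithin_succ] at this
    have hV' : HasDerivWithinAt (iteratedDerivWithin k w (Ioo (0:ℝ) 1))
        (iteratedDerivWithin (k+1) w (Ioo (0:ℝ) 1) x) (Ioo (0:ℝ) 1) x := by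
      have := hVd.hasDerivWithinAt
      rwa [← iteratedDerivWithin_succ] at this
    have hsum : HasDerivWithinAt
        (fun y => y * iteratedDerivWithin (k+1) w (Ioo (0:ℝ) 1) y
          + (k:ℝ) * iteratedDerivWithin k w (Ioo (0:ℝ) 1) y)
        (1 * iteratedDerivWithin (k+1) w (Ioo (0:ℝ) 1) x
          + x * iteratedDerivWithin (k+2) w (Ioo (0:ℝ) 1) x
          + (k:ℝ) * iteratedDerivWithin (k+1) w (Ioo (0:ℝ) 1) x) (Ioo (0:ℝ) 1) x :=
      (((hasDerivWithinAt_id x _).mul hW').add (hV'.const_mul ((k:ℝ))))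
    have hcong : derivWithin
        (iteratedDerivWithin k (fun y => y * derivWithin w (Ioo (0:ℝ) 1) y) (Ioo (0:ℝ) 1))
        (Ioo (0:ℝ) 1) x
        = derivWithin (fun y => y * iteratedDerivWithin (k+1) w (Ioo (0:ℝ) 1) y
            + (k:ℝ) * iteratedDerivWithin k w (Ioo (0:ℝ) 1) y) (Ioo (0:ℝ) 1) x :=
      derivWithin_congr (fun y hy => IH y hy) (IH x hx)
    rw [iteratedDerivWithin_succ, hcong, hsum.derivWithin hux]
    push_cast
    ring

theorem stmt5 (ℓ : ℕ) (hℓ : 1 ≤ ℓ) (f g : ℝ → ℝ)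
    (hfL2 : MemLp f 2 (volume.restrict (Ioo (0:ℝ) 1)))
    (hf : ContDiffOn ℝ (⊤ : ℕ∞) f (Ioo (0:ℝ) 1))
    (hg : ∀ x ∈ Ioo (0:ℝ) 1,
      g x = f x - 4 * ℓ * x ^ (2 * ℓ - 1) * ∫ t in x..1, (t ^ (2 * ℓ))⁻¹ * f t) :
    ∀ x ∈ Ioo (0:ℝ) 1,
      iteratedDerivWithin (2 * ℓ) f (Ioo (0:ℝ) 1) x
        + (4 * ℓ / x) * iteratedDerivWithin (2 * ℓ - 1) f (Ioo (0:ℝ) 1) x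
        = iteratedDerivWithin (2 * ℓ) g (Ioo (0:ℝ) 1) x := by
  intro x hx
  have hso : IsOpen (Ioo (0:ℝ) 1) := isOpen_Ioo
  have hu : UniqueDiffOn ℝ (Ioo (0:ℝ) 1) := hso.uniqueDiffOn
  obtain ⟨hx0, hx1⟩ := hx
  have hx' : x ∈ Ioo (0:ℝ) 1 := ⟨hx0, hx1⟩
  -- f is integrable on (0,1)
  haveI : IsFiniteMeasure (volume.restrict (Ioo (0:ℝ) 1)) :=
    ⟨by simp [Real.volume_Ioo]⟩
  have hfi : IntegrableOn f (Ioo (0:ℝ) 1) := hfL2.integrable (by norm_num)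
  set h : ℝ → ℝ := fun t => (t ^ (2 * ℓ))⁻¹ * f t with hh_def
  have hhc : ContinuousOn h (Ioo (0:ℝ) 1) := by
    apply ContinuousOn.mul
    · exact ((continuous_pow (2*ℓ)).continuousOn).inv₀
        (fun t ht => pow_ne_zero _ (ne_of_gt ht.1))
    · exact hf.continuousOn
  set F : ℝ → ℝ := fun y => ∫ t in y..1, h t with hF_def
  have hFd : ∀ y ∈ Ioo (0:ℝ) 1, HasDerivAt F (-(h y)) y := by
    intro y hy
    have hint : IntervalIntegrable h volume 1 y := by
      rw [intervalIntegrable_iff]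
      have hΙ : uIoc (1:ℝ) y = Ioc y 1 := by rw [uIoc_comm, uIoc_of_le hy.2.le]
      rw [hΙ, integrableOn_Ioc_iff_integrableOn_Ioo]
      have hfi' : IntegrableOn f (Ioo y 1) :=
        hfi.mono_set (fun t ht => ⟨lt_trans hy.1 ht.1, ht.2⟩)
      refine Integrable.bdd_mul (c := (y ^ (2*ℓ))⁻¹) hfi'
        ((measurable_id.pow_const _).inv).aestronglyMeasurable ?_
      refine (ae_restrict_iff' measurableSet_Ioo).2 (Filter.Eventually.of_forall fun t ht => ?_)
      have hty : y < t := ht.1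
      have ht0 : (0:ℝ) < t := lt_trans hy.1 hty
      rw [Real.norm_eq_abs, abs_of_nonneg (by positivity)]
      exact inv_anti₀ (pow_pos hy.1 _) (pow_le_pow_left₀ hy.1.le hty.le _)
    have hmeas := hhc.stronglyMeasurableAtFilter (μ := volume) hso y hy
    have hca : ContinuousAt h y := hhc.continuousAt (hso.mem_nhds hy)
    have H := intervalIntegral.integral_hasDerivAt_right hint hmeas hca
    have hFneg : F = fun u => -(∫ t in (1:ℝ)..u, h t) := by
      funext u
      rw [hF_def]
      exact intervalIntegral.integral_symm 1 u
    rw [hFneg]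
    exact H.neg
  have hFder : ∀ y ∈ Ioo (0:ℝ) 1, derivWithin F (Ioo (0:ℝ) 1) y = -(h y) := fun y hy =>
    ((hFd y hy).hasDerivWithinAt).derivWithin (hu y hy)
  have hFsm : ContDiffOn ℝ ∞ F (Ioo (0:ℝ) 1) := by
    rw [contDiffOn_infty_iff_derivWithin hu]
    refine ⟨fun y hy => ((hFd y hy).hasDerivWithinAt).differentiableWithinAt, ?_⟩
    have hsm : ContDiffOn ℝ ∞ (fun y => -(h y)) (Ioo (0:ℝ) 1) := by
      apply ContDiffOn.neg
      apply ContDiffOn.mul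
      · exact ((contDiff_id.pow (2*ℓ)).contDiffOn).inv
          (fun y hy => pow_ne_zero _ (ne_of_gt hy.1))
      · exact hf.of_le (by simp)
    exact hsm.congr hFder
  set m := 2 * ℓ - 1 with hm_def
  have hm1 : 1 ≤ m := by omega
  have hms : m + 1 = 2 * ℓ := by omega
  set w : ℝ → ℝ := fun y => y ^ m * F y with hw_def
  have hwsm : ContDiffOn ℝ ∞ w (Ioo (0:ℝ) 1) := ((contDiff_id.pow m).contDiffOn).mul hFsm
  have hode : ∀ y ∈ Ioo (0:ℝ) 1,
      y * derivWithin w (Ioo (0:ℝ) 1) y = (m:ℝ) * w y - f y := by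
    intro y hy
    have hy0 : y ≠ 0 := ne_of_gt hy.1
    have hwder : derivWithin w (Ioo (0:ℝ) 1) y
        = (m:ℝ) * y ^ (m-1) * F y + y ^ m * (-(h y)) := by
      have hder : HasDerivWithinAt w ((m:ℝ) * y ^ (m-1) * F y + y ^ m * (-(h y)))
          (Ioo (0:ℝ) 1) y :=
        ((hasDerivAt_pow m y).hasDerivWithinAt).mul ((hFd y hy).hasDerivWithinAt)
      exact hder.derivWithin (hu y hy)
    rw [hwder, hw_def, hh_def]
    have e1 : y * y ^ (m-1) = y ^ m := by
      rw [← pow_succ']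
      congr 1
      omega
    have e2 : y * y ^ m * (y ^ (2*ℓ))⁻¹ = 1 := by
      rw [← pow_succ', hms, mul_inv_cancel₀ (pow_ne_zero _ hy0)]
    calc y * ((m:ℝ) * y ^ (m-1) * F y + y ^ m * (-((y ^ (2*ℓ))⁻¹ * f y)))
        = (m:ℝ) * (y * y ^ (m-1)) * F y - (y * y ^ m * (y ^ (2*ℓ))⁻¹) * f y := by ring
      _ = (m:ℝ) * (y ^ m * F y) - f y := by rw [e1, e2]; ring
  -- smoothness at finite orders
  have hcast : ∀ k : ℕ, (k : WithTop ℕ∞) ≤ ∞ := by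
    intro k
    exact_mod_cast (WithTop.coe_le_coe.2 (le_top : (k:ℕ∞) ≤ ⊤) : ((k:ℕ∞) : WithTop ℕ∞) ≤ ((⊤:ℕ∞) : WithTop ℕ∞))
  have hfm : ContDiffOn ℝ ((m : ℕ) : WithTop ℕ∞) f (Ioo (0:ℝ) 1) := hf.of_le (by exact_mod_cast le_top)
  have hwm : ContDiffOn ℝ ((m : ℕ) : WithTop ℕ∞) w (Ioo (0:ℝ) 1) := hwsm.of_le (hcast m)
  have hw2ℓ : ContDiffOn ℝ ((2*ℓ : ℕ) : WithTop ℕ∞) w (Ioo (0:ℝ) 1) := hwsm.of_le (hcast (2*ℓ))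
  have hf2ℓ : ContDiffOn ℝ ((2*ℓ : ℕ) : WithTop ℕ∞) f (Ioo (0:ℝ) 1) := hf.of_le (hcast (2*ℓ))
  -- key identity
  have hL := aux_leibniz w hwsm m x hx'
  have hφ : EqOn (fun y => y * derivWithin w (Ioo (0:ℝ) 1) y)
      (fun y => (m:ℝ) * w y - f y) (Ioo (0:ℝ) 1) := fun y hy => hode y hy
  have hcongr := iteratedDerivWithin_congr (n := m) hφ hx'
  have hsub : iteratedDerivWithin m (fun y => (m:ℝ) * w y - f y) (Ioo (0:ℝ) 1) x
      = (m:ℝ) * iteratedDerivWithin m w (Ioo (0:ℝ) 1) x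
        - iteratedDerivWithin m f (Ioo (0:ℝ) 1) x := by
    have h1 : (fun y => (m:ℝ) * w y - f y) = ((fun y => (m:ℝ) * w y) - f) := rfl
    rw [h1, iteratedDerivWithin_sub hx' hu (contDiffOn_const.mul hwm x hx') (hfm x hx'),
      iteratedDerivWithin_const_mul hx' hu ((m:ℝ)) (hwm x hx')]
  have hkey : x * iteratedDerivWithin (m+1) w (Ioo (0:ℝ) 1) x
      = - iteratedDerivWithin m f (Ioo (0:ℝ) 1) x := by
    have := hL.symm.trans (hcongr.trans hsub)
    linarith
  -- express g
  have hgeq : EqOn g (fun y => f y + (-(4*(ℓ:ℝ))) * w y) (Ioo (0:ℝ) 1) := by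
    intro y hy
    rw [hg y hy, hw_def, hF_def, hh_def]
    ring
  have hD2g : iteratedDerivWithin (2*ℓ) g (Ioo (0:ℝ) 1) x
      = iteratedDerivWithin (2*ℓ) f (Ioo (0:ℝ) 1) x
        + (-(4*(ℓ:ℝ))) * iteratedDerivWithin (2*ℓ) w (Ioo (0:ℝ) 1) x := by
    rw [iteratedDerivWithin_congr hgeq hx']
    have h1 : (fun y => f y + (-(4*(ℓ:ℝ))) * w y) = (f + fun y => (-(4*(ℓ:ℝ))) * w y) := rfl
    rw [h1, iteratedDerivWithin_add hx' hu (hf2ℓ x hx') (contDiffOn_const.mul hw2ℓ x hx'),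
      iteratedDerivWithin_const_mul hx' hu (-(4*(ℓ:ℝ))) (hw2ℓ x hx')]
  have hx0' : x ≠ 0 := ne_of_gt hx0
  have hw2 : iteratedDerivWithin (2*ℓ) w (Ioo (0:ℝ) 1) x
      = - iteratedDerivWithin m f (Ioo (0:ℝ) 1) x / x := by
    rw [← hms]
    field_simp
    linarith [hkey]
  rw [hD2g, hw2]
  field_simp
end

section
/- Let ℓ ≥ 1 and let f be smooth on (0,1) with ∫₀ˣ t^{2ℓ-1}|f(t)| dt finite for all x, and set g(x) = f(x) - (4ℓ/x^{2ℓ}) ∫₀ˣ t^{2ℓ-1} f(t) dt. Then g^{(2ℓ+1)}(x) + (4ℓ/x) g^{(2ℓ)}(x) = f^{(2ℓ+1)}(x) on (0,1). -/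
open MeasureTheory Set

theorem stmt6 (ℓ : ℕ) (hℓ : 1 ≤ ℓ) (f g : ℝ → ℝ)
    (hf : ContDiffOn ℝ (⊤ : ℕ∞) f (Ioo (0:ℝ) 1))
    (hint : ∀ x ∈ Ioo (0:ℝ) 1, IntegrableOn (fun t => t ^ (2 * ℓ - 1) * |f t|) (Ioo 0 x) volume)
    (hg : ∀ x ∈ Ioo (0:ℝ) 1,
      g x = f x - (4 * ℓ / x ^ (2 * ℓ)) * ∫ t in (0:ℝ)..x, t ^ (2 * ℓ - 1) * f t) :
    ∀ x ∈ Ioo (0:ℝ) 1,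
      iteratedDerivWithin (2 * ℓ + 1) g (Ioo (0:ℝ) 1) x
        + (4 * ℓ / x) * iteratedDerivWithin (2 * ℓ) g (Ioo (0:ℝ) 1) x
        = iteratedDerivWithin (2 * ℓ + 1) f (Ioo (0:ℝ) 1) x := by
  have hsO : IsOpen (Ioo (0:ℝ) 1) := isOpen_Ioo
  have hsU : UniqueDiffOn ℝ (Ioo (0:ℝ) 1) := hsO.uniqueDiffOn
  set s := Ioo (0:ℝ) 1 with hs
  obtain ⟨k, hk⟩ : ∃ k, 2 * ℓ = k + 1 := ⟨2 * ℓ - 1, by omega⟩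
  have hk' : 2 * ℓ - 1 = k := by omega
  set F : ℝ → ℝ := fun y => ∫ t in (0:ℝ)..y, t ^ (2 * ℓ - 1) * f t with hFdef
  set u : ℝ → ℝ := fun y => F y / y ^ (2 * ℓ) with hudef
  have hfc : ContinuousOn f s := hf.continuousOn
  have hphic : ContinuousOn (fun t => t ^ (2 * ℓ - 1) * f t) s :=
    ((continuous_pow _).continuousOn).mul hfc
  -- FTC: derivative of F
  have hFd : ∀ y ∈ s, HasDerivAt F (y ^ (2 * ℓ - 1) * f y) y := by
    intro y hy
    have hsub : Ioo (0:ℝ) y ⊆ s := fun t ht => ⟨ht.1, ht.2.trans hy.2⟩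
    have hInt : IntervalIntegrable (fun t => t ^ (2 * ℓ - 1) * f t) volume 0 y := by
      rw [intervalIntegrable_iff_integrableOn_Ioc_of_le hy.1.le,
        integrableOn_Ioc_iff_integrableOn_Ioo]
      have hmeas : AEStronglyMeasurable (fun t => t ^ (2 * ℓ - 1) * f t)
          (volume.restrict (Ioo 0 y)) :=
        (hphic.mono hsub).aestronglyMeasurable measurableSet_Ioo
      refine Integrable.mono' (hint y hy) hmeas ?_
      filter_upwards [ae_restrict_mem measurableSet_Ioo] with t ht
      rw [Real.norm_eq_abs, abs_mul, abs_pow, abs_of_pos ht.1]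
    exact intervalIntegral.integral_hasDerivAt_right hInt
      (hphic.stronglyMeasurableAtFilter hsO y hy)
      (hphic.continuousAt (hsO.mem_nhds hy))
  -- derivative of u
  have hud : ∀ y ∈ s, HasDerivAt u ((f y - 2 * ℓ * u y) / y) y := by
    intro y hy
    have hy0 : (0:ℝ) < y := hy.1
    have hpow : y ^ (2 * ℓ) ≠ 0 := pow_ne_zero _ hy0.ne'
    have h1 := (hFd y hy).div (hasDerivAt_pow (2 * ℓ) y) hpow
    convert h1 using 1
    · rfl
    · rfl
    · rfl
    have h2l : 2 * (ℓ:ℝ) = (k:ℝ) + 1 := by exact_mod_cast hk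
    rw [hudef]
    simp only [hk, hk']
    push_cast
    rw [h2l]
    field_simp
    ring
  -- u is C^n for every n
  have husmooth : ∀ n : ℕ, ContDiffOn ℝ n u s := by
    intro n
    induction n with
    | zero =>
      rw [CharP.cast_eq_zero, contDiffOn_zero]
      exact fun y hy => ((hud y hy).continuousAt.continuousWithinAt)
    | succ n ih =>
      rw [show ((n + 1 : ℕ) : WithTop ℕ∞) = (n : WithTop ℕ∞) + 1 by push_cast; rfl,
        contDiffOn_succ_iff_deriv_of_isOpen hsO]
      refine ⟨fun y hy => (hud y hy).differentiableAt.differentiableWithinAt, by simp, ?_⟩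
      have hform : ContDiffOn ℝ n (fun y => (f y - 2 * ℓ * u y) / y) s := by
        refine ContDiffOn.div ?_ contDiffOn_id (fun y hy => ne_of_gt hy.1)
        exact (hf.of_le (by exact_mod_cast le_top)).sub (contDiffOn_const.mul ih)
      exact hform.congr fun y hy => (hud y hy).deriv
  -- differentiability of iterated derivatives
  have hdiffu : ∀ m : ℕ, ∀ y ∈ s, DifferentiableWithinAt ℝ (iteratedDerivWithin m u s) s y := by
    intro m y hy
    exact ((husmooth (m + 1)).differentiableOn_iteratedDerivWithin
      (by exact_mod_cast Nat.lt_succ_self m) hsU) y hy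
  have hdifff : ∀ m : ℕ, ∀ y ∈ s, DifferentiableWithinAt ℝ (iteratedDerivWithin m f s) s y := by
    intro m y hy
    exact (hf.differentiableOn_iteratedDerivWithin (by exact_mod_cast ENat.coe_lt_top m) hsU) y hy
  -- key identity
  have key : ∀ n : ℕ, ∀ y ∈ s,
      y * iteratedDerivWithin (n + 1) u s y + ((n : ℝ) + 2 * ℓ) * iteratedDerivWithin n u s y
        = iteratedDerivWithin n f s y := by
    intro n
    induction n with
    | zero =>
      intro y hy
      rw [iteratedDerivWithin_one, iteratedDerivWithin_zero, iteratedDerivWithin_zero,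
        derivWithin_of_isOpen hsO hy, (hud y hy).deriv]
      have hy0 : y ≠ 0 := ne_of_gt hy.1
      field_simp
      try ring
    | succ n ih =>
      intro y hy
      have hUD := hsU y hy
      have hD1 : HasDerivWithinAt (iteratedDerivWithin (n + 1) u s)
          (iteratedDerivWithin (n + 1 + 1) u s y) s y := by
        have h := (hdiffu (n + 1) y hy).hasDerivWithinAt
        rwa [← iteratedDerivWithin_succ] at h
      have hD0 : HasDerivWithinAt (iteratedDerivWithin n u s)
          (iteratedDerivWithin (n + 1) u s y) s y := by
        have h := (hdiffu n y hy).hasDerivWithinAt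
        rwa [← iteratedDerivWithin_succ] at h
      have hDf : HasDerivWithinAt (iteratedDerivWithin n f s)
          (iteratedDerivWithin (n + 1) f s y) s y := by
        have h := (hdifff n y hy).hasDerivWithinAt
        rwa [← iteratedDerivWithin_succ] at h
      have hlhs : HasDerivWithinAt
          (fun z => z * iteratedDerivWithin (n + 1) u s z
            + ((n : ℝ) + 2 * ℓ) * iteratedDerivWithin n u s z)
          ((1 * iteratedDerivWithin (n + 1) u s y + y * iteratedDerivWithin (n + 1 + 1) u s y)
            + ((n : ℝ) + 2 * ℓ) * iteratedDerivWithin (n + 1) u s y) s y :=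
        ((hasDerivWithinAt_id y s).mul hD1).add (hD0.const_mul _)
      have heq : derivWithin
          (fun z => z * iteratedDerivWithin (n + 1) u s z
            + ((n : ℝ) + 2 * ℓ) * iteratedDerivWithin n u s z) s y
          = derivWithin (iteratedDerivWithin n f s) s y :=
        derivWithin_congr (fun z hz => ih z hz) (ih y hy)
      rw [hlhs.derivWithin hUD, hDf.derivWithin hUD] at heq
      push_cast
      linarith [heq]
  -- relation between g and u
  have hgu : Set.EqOn g (fun y => f y - (4 * (ℓ:ℝ)) • u y) s := by
    intro y hy
    have hy0 : y ≠ 0 := ne_of_gt hy.1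
    have hpow : y ^ (2 * ℓ) ≠ 0 := pow_ne_zero _ hy0
    rw [hg y hy]
    simp only [smul_eq_mul, hudef]
    field_simp
    try ring
  intro x hx
  have hx0 : x ≠ 0 := ne_of_gt hx.1
  have hDg : ∀ n : ℕ, iteratedDerivWithin n g s x
      = iteratedDerivWithin n f s x - 4 * ℓ * iteratedDerivWithin n u s x := by
    intro n
    rw [iteratedDerivWithin_congr hgu hx]
    have hfs : ContDiffOn ℝ n f s := hf.of_le (by exact_mod_cast le_top)
    have hus : ContDiffOn ℝ n ((4 * (ℓ:ℝ)) • u) s := by exact (husmooth n).const_smul (4 * (ℓ:ℝ))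
    have : (fun y => f y - (4 * (ℓ:ℝ)) • u y) = f - (4 * (ℓ:ℝ)) • u := rfl
    rw [this, iteratedDerivWithin_sub hx hsU (hfs x hx) (hus x hx),
      iteratedDerivWithin_const_smul hx hsU _ (husmooth n x hx)]
    simp [smul_eq_mul]
    try ring
  have hkey := key (2 * ℓ) x hx
  rw [hDg (2 * ℓ + 1), hDg (2 * ℓ)]
  have hcast : ((2 * ℓ : ℕ) : ℝ) + 2 * ℓ = 4 * (ℓ : ℝ) := by push_cast; ring
  rw [hcast] at hkey
  field_simp
  nlinarith [hkey]
end

section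
/- Let ℓ ≥ 1 and f ∈ L²(0,1), and set g = S_ℓ*[f], i.e. g(x) = f(x) - (4ℓ/x^{2ℓ}) ∫₀ˣ t^{2ℓ-1} f(t) dt. Then for all x ∈ (0,1), 2ℓ g(x) + x g'(x) = -2ℓ f(x) + x f'(x) (in the distributional sense, or pointwise for smooth f). -/
open MeasureTheory Set

theorem stmt7 (ℓ : ℕ) (hℓ : 1 ≤ ℓ) (f g : ℝ → ℝ)
    (hfL2 : MemLp f 2 (volume.restrict (Ioo (0:ℝ) 1)))
    (hf : ContDiffOn ℝ (⊤ : ℕ∞) f (Ioo (0:ℝ) 1))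
    (hg : ∀ x ∈ Ioo (0:ℝ) 1,
      g x = f x - (4 * ℓ / x ^ (2 * ℓ)) * ∫ t in (0:ℝ)..x, t ^ (2 * ℓ - 1) * f t) :
    ∀ x ∈ Ioo (0:ℝ) 1,
      2 * ℓ * g x + x * derivWithin g (Ioo (0:ℝ) 1) x
        = -(2 * ℓ) * f x + x * derivWithin f (Ioo (0:ℝ) 1) x := by
  intro x hx
  obtain ⟨hx0, hx1⟩ := hx
  have hxmem : x ∈ Ioo (0:ℝ) 1 := ⟨hx0, hx1⟩
  have hx0' : x ≠ 0 := ne_of_gt hx0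
  obtain ⟨m, hm⟩ : ∃ m, 2 * ℓ = m + 1 := ⟨2 * ℓ - 1, by omega⟩
  have hxn : x ^ (2 * ℓ) ≠ 0 := pow_ne_zero _ hx0'
  haveI : IsFiniteMeasure (volume.restrict (Ioo (0:ℝ) 1)) := by
    constructor
    simp [Real.volume_Ioo]
  have hfInt : IntegrableOn f (Ioo (0:ℝ) 1) volume := hfL2.integrable (by norm_num)
  have hcontInt : ContinuousOn (fun t : ℝ => t ^ (2 * ℓ - 1) * f t) (Ioo (0:ℝ) 1) :=
    (continuous_pow _).continuousOn.mul hf.continuousOn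
  have hInt : IntegrableOn (fun t : ℝ => t ^ (2 * ℓ - 1) * f t) (Ioo (0:ℝ) 1) volume := by
    apply Integrable.bdd_mul (c := 1) hfInt (continuous_pow _).aestronglyMeasurable
    refine (ae_restrict_iff' measurableSet_Ioo).2 (Filter.Eventually.of_forall fun t ht => ?_)
    rw [Real.norm_eq_abs, abs_pow]
    calc |t| ^ (2 * ℓ - 1) ≤ 1 ^ (2 * ℓ - 1) := by
          apply pow_le_pow_left₀ (abs_nonneg t)
          rw [abs_of_pos ht.1]; exact le_of_lt ht.2
      _ = 1 := one_pow _
  have hii : IntervalIntegrable (fun t : ℝ => t ^ (2 * ℓ - 1) * f t) volume 0 x := by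
    rw [intervalIntegrable_iff_integrableOn_Ioc_of_le (le_of_lt hx0)]
    exact hInt.mono_set fun t ht => ⟨ht.1, lt_of_le_of_lt ht.2 hx1⟩
  set F := fun y : ℝ => ∫ t in (0:ℝ)..y, t ^ (2 * ℓ - 1) * f t with hF
  have hFder : HasDerivAt F (x ^ (2 * ℓ - 1) * f x) x := by
    apply intervalIntegral.integral_hasDerivAt_right hii
    · exact ⟨Ioo 0 1, isOpen_Ioo.mem_nhds hxmem,
        hcontInt.aestronglyMeasurable measurableSet_Ioo⟩
    · exact hcontInt.continuousAt (isOpen_Ioo.mem_nhds hxmem)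
  have hfd : DifferentiableAt ℝ f x :=
    ((hf.differentiableOn (by simp)) x hxmem).differentiableAt (isOpen_Ioo.mem_nhds hxmem)
  have hfder : HasDerivAt f (deriv f x) x := hfd.hasDerivAt
  have hpow : HasDerivAt (fun y : ℝ => y ^ (2 * ℓ)) ((2 * ℓ : ℕ) * x ^ (2 * ℓ - 1)) x :=
    hasDerivAt_pow (2 * ℓ) x
  have hinv : HasDerivAt (fun y : ℝ => (y ^ (2 * ℓ))⁻¹)
      (-((2 * ℓ : ℕ) * x ^ (2 * ℓ - 1)) / (x ^ (2 * ℓ)) ^ 2) x := hpow.inv hxn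
  have hc : HasDerivAt (fun y : ℝ => (4 * (ℓ : ℝ)) * (y ^ (2 * ℓ))⁻¹)
      ((4 * (ℓ : ℝ)) * (-((2 * ℓ : ℕ) * x ^ (2 * ℓ - 1)) / (x ^ (2 * ℓ)) ^ 2)) x :=
    hinv.const_mul _
  have hφ : HasDerivAt (fun y : ℝ => f y - (4 * (ℓ : ℝ)) * (y ^ (2 * ℓ))⁻¹ * F y)
      (deriv f x - ((4 * (ℓ : ℝ)) * (-((2 * ℓ : ℕ) * x ^ (2 * ℓ - 1)) / (x ^ (2 * ℓ)) ^ 2) * F x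
        + (4 * (ℓ : ℝ)) * (x ^ (2 * ℓ))⁻¹ * (x ^ (2 * ℓ - 1) * f x))) x :=
    hfder.sub (hc.mul hFder)
  have hgφ : g =ᶠ[nhds x] fun y : ℝ => f y - (4 * (ℓ : ℝ)) * (y ^ (2 * ℓ))⁻¹ * F y := by
    filter_upwards [isOpen_Ioo.mem_nhds hxmem] with y hy
    rw [hg y hy, div_eq_mul_inv]
  have hgder : HasDerivAt g
      (deriv f x - ((4 * (ℓ : ℝ)) * (-((2 * ℓ : ℕ) * x ^ (2 * ℓ - 1)) / (x ^ (2 * ℓ)) ^ 2) * F x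
        + (4 * (ℓ : ℝ)) * (x ^ (2 * ℓ))⁻¹ * (x ^ (2 * ℓ - 1) * f x))) x :=
    hφ.congr_of_eventuallyEq hgφ
  rw [derivWithin_of_isOpen isOpen_Ioo hxmem, derivWithin_of_isOpen isOpen_Ioo hxmem,
    hgder.deriv, hg x hxmem]
  have h1 : 2 * ℓ - 1 = m := by omega
  have h2 : x ^ (2 * ℓ) = x ^ m * x := by rw [hm, pow_succ]
  simp only [hF]
  rw [h1, h2]
  have hxm : x ^ m ≠ 0 := pow_ne_zero _ hx0'
  have hmr : ((m:ℝ) + 1) = 2 * (ℓ:ℝ) := by exact_mod_cast hm.symm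
  push_cast [hm]
  rw [hmr]
  field_simp
  ring
end

section
/- Let y ∈ H¹₀(0,1) be a real function with y(0) = y(1) = 0 such that y is even with respect to x = 1/2 (i.e. y(1-x) = y(x)) and y satisfies, in the sense of distributions on (0,1), y''(x) + (2/x - 2/(1-x)) y'(x) - (2/x² + 2/(1-x)² + 4/x + 4/(1-x)) y(x) = 0. Then y = 0. -/
/-!
Maximum principle: since the coefficient of `y` is negative, at an interior positive maximum
of `y` we would have `y' = 0` and hence `y'' = q y > 0`, which is impossible at a maximum.
So `y ≤ 0`, and by the same argument for `-y`, `y = 0`.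
-/

open MeasureTheory Set Filter Topology

/-- At a local maximum the second derivative test cannot succeed: it would also make `x₀` a local
minimum, so `f` would be locally constant and `deriv (deriv f) x₀ = 0`. -/
theorem IsLocalMax.deriv_deriv_nonpos {f : ℝ → ℝ} {x₀ : ℝ} (hmax : IsLocalMax f x₀)
    (hc : ContinuousAt f x₀) : deriv (deriv f) x₀ ≤ 0 := by
  by_contra! hpos
  have hmin : IsLocalMin f x₀ := isLocalMin_of_deriv_deriv_pos hpos hmax.deriv_eq_zero hc
  have hconst : f =ᶠ[𝓝 x₀] fun _ => f x₀ :=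
    (hmin.and hmax).mono fun _ hx => le_antisymm hx.2 hx.1
  have hderiv : deriv f =ᶠ[𝓝 x₀] fun _ => 0 :=
    hconst.deriv.trans (Eventually.of_forall fun _ => deriv_const _ _)
  rw [hderiv.deriv_eq, deriv_const] at hpos
  exact hpos.false

theorem nonpos_of_deriv_deriv_pos {y : ℝ → ℝ} {a b : ℝ} (hcont : ContinuousOn y (Icc a b))
    (ha : y a ≤ 0) (hb : y b ≤ 0)
    (hdd : ∀ x ∈ Ioo a b, 0 < y x → deriv y x = 0 → 0 < deriv (deriv y) x) :
    ∀ x ∈ Icc a b, y x ≤ 0 := by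
  intro x hx
  by_contra! hpos
  obtain ⟨c, hcI, hmax⟩ := isCompact_Icc.exists_isMaxOn ⟨x, hx⟩ hcont
  have hyc : 0 < y c := hpos.trans_le (hmax hx)
  have hc : c ∈ Ioo a b :=
    ⟨hcI.1.lt_of_ne (by rintro rfl; linarith), hcI.2.lt_of_ne (by rintro rfl; linarith)⟩
  have hnhds : Icc a b ∈ 𝓝 c := Icc_mem_nhds hc.1 hc.2
  have hloc : IsLocalMax y c := hmax.isLocalMax hnhds
  exact (hdd c hc hyc hloc.deriv_eq_zero).not_ge
    (hloc.deriv_deriv_nonpos (hcont.continuousAt hnhds))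

section LinearODE

variable {y p q : ℝ → ℝ} {a b : ℝ}

theorem nonpos_of_deriv_deriv_add_mul_deriv_sub_mul_eq_zero (hcont : ContinuousOn y (Icc a b))
    (ha : y a ≤ 0) (hb : y b ≤ 0) (hq : ∀ x ∈ Ioo a b, 0 < q x)
    (hode : ∀ x ∈ Ioo a b, deriv (deriv y) x + p x * deriv y x - q x * y x = 0) :
    ∀ x ∈ Icc a b, y x ≤ 0 := by
  refine nonpos_of_deriv_deriv_pos hcont ha hb fun x hx hyx hdx => ?_
  have h := hode x hx
  rw [hdx, mul_zero, add_zero, sub_eq_zero] at h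
  exact h ▸ mul_pos (hq x hx) hyx

theorem eq_zero_of_deriv_deriv_add_mul_deriv_sub_mul_eq_zero (hcont : ContinuousOn y (Icc a b))
    (ha : y a = 0) (hb : y b = 0) (hq : ∀ x ∈ Ioo a b, 0 < q x)
    (hode : ∀ x ∈ Ioo a b, deriv (deriv y) x + p x * deriv y x - q x * y x = 0) :
    ∀ x ∈ Icc a b, y x = 0 := by
  have hode_neg : ∀ x ∈ Ioo a b,
      deriv (deriv (-y)) x + p x * deriv (-y) x - q x * (-y) x = 0 := by
    intro x hx
    simp only [deriv.neg', deriv.fun_neg, Pi.neg_apply]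
    linarith [hode x hx]
  intro x hx
  have hle := nonpos_of_deriv_deriv_add_mul_deriv_sub_mul_eq_zero hcont ha.le hb.le hq hode x hx
  have hge := nonpos_of_deriv_deriv_add_mul_deriv_sub_mul_eq_zero hcont.neg
    (by simp [ha]) (by simp [hb]) hq hode_neg x hx
  exact le_antisymm hle (neg_nonpos.1 hge)

end LinearODE

theorem stmt13_general (y : ℝ → ℝ)
    (hcont : ContinuousOn y (Icc (0:ℝ) 1))
    (h0 : y 0 = 0) (h1 : y 1 = 0)
    (hode : ∀ x ∈ Ioo (0:ℝ) 1,
      deriv (deriv y) x + (2 / x - 2 / (1 - x)) * deriv y x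
        - (2 / x ^ 2 + 2 / (1 - x) ^ 2 + 4 / x + 4 / (1 - x)) * y x = 0) :
    ∀ x ∈ Icc (0:ℝ) 1, y x = 0 := by
  refine eq_zero_of_deriv_deriv_add_mul_deriv_sub_mul_eq_zero hcont h0 h1 (fun x hx => ?_) hode
  have : 0 < 1 - x := sub_pos.2 hx.2
  have := hx.1
  positivity

theorem stmt13 (y : ℝ → ℝ)
    (hcont : ContinuousOn y (Icc (0:ℝ) 1))
    (hsmooth : ContDiffOn ℝ ⊤ y (Ioo (0:ℝ) 1))
    (hL2 : MemLp y 2 (volume.restrict (Ioo (0:ℝ) 1)))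
    (hL2' : MemLp (deriv y) 2 (volume.restrict (Ioo (0:ℝ) 1)))
    (h0 : y 0 = 0) (h1 : y 1 = 0)
    (hsym : ∀ x ∈ Icc (0:ℝ) 1, y (1 - x) = y x)
    (hode : ∀ x ∈ Ioo (0:ℝ) 1,
      deriv (deriv y) x + (2 / x - 2 / (1 - x)) * deriv y x
        - (2 / x ^ 2 + 2 / (1 - x) ^ 2 + 4 / x + 4 / (1 - x)) * y x = 0) :
    ∀ x ∈ Icc (0:ℝ) 1, y x = 0 :=
  stmt13_general y hcont h0 h1 hode
end

section
/- Let g ∈ L²(0,1) with G(x) = ∫₀ˣ g(t) dt satisfying G(1) = 0, and suppose ∫₀¹ g(x) [ (1/z) cos(z(2x-1)) - sin(z(2x-1)) ] dx = 0 for all z ∈ ℂ \ {0}. Then the function 2G(x) - g(x) is even with respect to x = 1/2 (in the distributional sense). -/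
/-!
Write `F = 2G - g`. Integrating by parts against `cos (z (2x - 1))`, with `G 0 = G 1 = 0`, turns
the hypothesis into `∫₀¹ F x sin (c (2x - 1)) dx = 0` for every real `c`. Taking `c = π n` shows
that every sine coefficient of `F` on `[0, 1]` vanishes, i.e. that the Fourier coefficients of
`F` at `n` and `-n` agree. These are the coefficients of `F (1 - x)` at `n`, so
`F - F (1 - ·)` has no Fourier coefficients at all and vanishes by Parseval.
-/

open MeasureTheory Set Real

theorem integral_primitive_mul_deriv {g φ : ℝ → ℝ} {a b : ℝ}
    (hg : IntervalIntegrable g volume a b) (hφ : ContDiff ℝ 1 φ) :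
    ∫ x in a..b, (∫ t in a..x, g t) * deriv φ x
      = (∫ t in a..b, g t) * φ b - ∫ x in a..b, g x * φ x := by
  have hG := hg.absolutelyContinuousOnInterval_intervalIntegral (c := a) left_mem_uIcc
  rw [hG.integral_mul_deriv_eq_deriv_mul (hφ.contDiffOn.absolutelyContinuousOnInterval),
    intervalIntegral.integral_same, zero_mul, sub_zero]
  congr 1
  refine intervalIntegral.integral_congr_ae ?_
  filter_upwards [hg.ae_hasDerivAt_integral] with x hx hx'
  rw [(hx (uIoc_subset_uIcc hx') a left_mem_uIcc).deriv]

theorem integral_two_mul_primitive_sub_mul_sin_eq_zero {g G : ℝ → ℝ}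
    (hg : IntervalIntegrable g volume 0 1) (hG : ∀ x, G x = ∫ t in (0:ℝ)..x, g t) (hG1 : G 1 = 0)
    {c : ℝ} (hc : c ≠ 0)
    (h : ∫ x in (0:ℝ)..1, g x * (c⁻¹ * cos (c * (2 * x - 1)) - sin (c * (2 * x - 1))) = 0) :
    ∫ x in (0:ℝ)..1, (2 * G x - g x) * sin (c * (2 * x - 1)) = 0 := by
  have hGc : ContinuousOn G (uIcc 0 1) :=
    (hg.absolutelyContinuousOnInterval_intervalIntegral left_mem_uIcc).continuousOn.congr
      fun x _ => hG x
  have hderiv : deriv (fun x => cos (c * (2 * x - 1))) =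
      fun x => -(2 * c) * sin (c * (2 * x - 1)) := by
    ext x
    have : HasDerivAt (fun x => cos (c * (2 * x - 1)))
        (-sin (c * (2 * x - 1)) * (c * (2 * 1))) x :=
      ((hasDerivAt_id x).const_mul 2 |>.sub_const 1 |>.const_mul c).cos
    rw [this.deriv]
    ring
  have hparts :=
    integral_primitive_mul_deriv hg (φ := fun x => cos (c * (2 * x - 1))) (by fun_prop)
  simp only [← hG, hG1, hderiv, zero_mul, zero_sub] at hparts
  have hGsin : IntervalIntegrable (fun x => G x * sin (c * (2 * x - 1))) volume 0 1 :=
    (hGc.mul (by fun_prop)).intervalIntegrable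
  have hgcos : IntervalIntegrable (fun x => g x * cos (c * (2 * x - 1))) volume 0 1 :=
    hg.mul_continuousOn (by fun_prop)
  have hgsin : IntervalIntegrable (fun x => g x * sin (c * (2 * x - 1))) volume 0 1 :=
    hg.mul_continuousOn (by fun_prop)
  have hparts' : -(2 * c) * ∫ x in (0:ℝ)..1, G x * sin (c * (2 * x - 1)) =
      -∫ x in (0:ℝ)..1, g x * cos (c * (2 * x - 1)) := by
    rw [← hparts, ← intervalIntegral.integral_const_mul]
    congr 1 with x
    ring
  have h' : c⁻¹ * (∫ x in (0:ℝ)..1, g x * cos (c * (2 * x - 1))) -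
      ∫ x in (0:ℝ)..1, g x * sin (c * (2 * x - 1)) = 0 := by
    refine Eq.trans ?_ h
    rw [← intervalIntegral.integral_const_mul,
      ← intervalIntegral.integral_sub (hgcos.const_mul _) hgsin]
    congr 1 with x
    ring
  have hsplit : ∫ x in (0:ℝ)..1, (2 * G x - g x) * sin (c * (2 * x - 1)) =
      2 * (∫ x in (0:ℝ)..1, G x * sin (c * (2 * x - 1))) -
        ∫ x in (0:ℝ)..1, g x * sin (c * (2 * x - 1)) := by
    rw [← intervalIntegral.integral_const_mul,
      ← intervalIntegral.integral_sub (hGsin.const_mul _) hgsin]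
    congr 1 with x
    ring
  rw [hsplit]
  refine (mul_eq_zero.1 ?_).resolve_left hc
  field_simp at h'
  linear_combination h' - hparts'

theorem integral_mul_sin_two_pi_mul_div_eq_zero {T : ℝ} (hT : T ≠ 0) {F : ℝ → ℝ}
    (h : ∀ c : ℝ, ∫ x in (0:ℝ)..T, F x * sin (c * (2 * x - T)) = 0) (n : ℤ) :
    ∫ x in (0:ℝ)..T, F x * sin (2 * π * n * x / T) = 0 := by
  have hshift : ∀ x : ℝ, sin (π * n / T * (2 * x - T)) = (-1) ^ n * sin (2 * π * n * x / T) := by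
    intro x
    rw [← sin_sub_int_mul_pi]
    congr 1
    field_simp
  have := h (π * n / T)
  simp only [hshift, mul_left_comm (F _), intervalIntegral.integral_const_mul] at this
  exact (mul_eq_zero.1 this).resolve_left (zpow_ne_zero _ (by norm_num))

theorem MeasureTheory.MemLp.intervalIntegrable {E : Type*} [NormedAddCommGroup E] {f : ℝ → E}
    {p : ENNReal} {a b : ℝ} (hab : a ≤ b) (hp : 1 ≤ p)
    (hf : MemLp f p (volume.restrict (Ioc a b))) :
    IntervalIntegrable f volume a b :=
  (intervalIntegrable_iff_integrableOn_Ioc_of_le hab).2 (hf.integrable hp)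

theorem MeasureTheory.MemLp.comp_add_sub_Ioc {E : Type*} [NormedAddCommGroup E] {f : ℝ → E}
    {p : ENNReal} {a b : ℝ} (hf : MemLp f p (volume.restrict (Ioc a b))) :
    MemLp (fun x => f (a + b - x)) p (volume.restrict (Ioc a b)) := by
  rw [Measure.restrict_congr_set Ioc_ae_eq_Icc] at hf ⊢
  have hpre : (fun x => a + b - x) ⁻¹' Icc a b = Icc a b := by
    ext x
    simp only [mem_preimage, mem_Icc]
    constructor <;> intro h <;> constructor <;> linarith [h.1, h.2]
  have hmp := (Measure.measurePreserving_sub_left volume (a + b)).restrict_preimage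
    (measurableSet_Icc (a := a) (b := b))
  rw [hpre] at hmp
  exact hf.comp_measurePreserving hmp

theorem ContinuousOn.memLp_restrict_Ioc {E : Type*} [NormedAddCommGroup E] {f : ℝ → E}
    {a b : ℝ} (hf : ContinuousOn f (Icc a b)) (p : ENNReal) :
    MemLp f p (volume.restrict (Ioc a b)) := by
  obtain ⟨C, hC⟩ := isCompact_Icc.exists_bound_of_continuousOn hf
  refine MemLp.of_bound
    ((hf.mono Ioc_subset_Icc_self).aestronglyMeasurable measurableSet_Ioc) C ?_
  filter_upwards [ae_restrict_mem measurableSet_Ioc] with x hx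
  exact hC x (Ioc_subset_Icc_self hx)

theorem fourierCoeffOn_sub {a b : ℝ} (hab : a < b) {f g : ℝ → ℂ}
    (hf : IntervalIntegrable f volume a b) (hg : IntervalIntegrable g volume a b) (n : ℤ) :
    fourierCoeffOn hab (f - g) n = fourierCoeffOn hab f n - fourierCoeffOn hab g n := by
  have he : Continuous fun x : ℝ => fourier (-n) (x : AddCircle (b - a)) :=
    (map_continuous _).comp (AddCircle.continuous_mk' _)
  simp only [fourierCoeffOn_eq_integral, Pi.sub_apply, smul_eq_mul, mul_sub]
  rw [intervalIntegral.integral_sub (hf.continuousOn_mul he.continuousOn)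
    (hg.continuousOn_mul he.continuousOn), smul_sub]

theorem fourierCoeffOn_comp_sub_left {T : ℝ} (hT : 0 < T) (f : ℝ → ℂ) (n : ℤ) :
    fourierCoeffOn hT (fun x => f (T - x)) n = fourierCoeffOn hT f (-n) := by
  -- `fourierCoeffOn_eq_integral` lands in `AddCircle (T - 0)`, not `AddCircle T`.
  have hrefl : ∀ x : ℝ, fourier (-n) (↑(T - x) : AddCircle (T - 0)) =
      fourier (-(-n)) (↑x : AddCircle (T - 0)) := by
    intro x
    rw [fourier_coe_apply, fourier_coe_apply, Complex.exp_eq_exp_iff_exists_int]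
    refine ⟨-n, ?_⟩
    have : (T : ℂ) ≠ 0 := by exact_mod_cast hT.ne'
    push_cast
    field_simp
    ring
  rw [fourierCoeffOn_eq_integral, fourierCoeffOn_eq_integral]
  congr 1
  have hsub := intervalIntegral.integral_comp_sub_left (a := 0) (b := T)
    (fun x => fourier (-n) (↑(T - x) : AddCircle (T - 0)) • f x) T
  simp only [sub_sub_cancel, sub_self, hrefl] at hsub
  simpa only [sub_zero] using hsub

theorem fourierCoeffOn_neg_sub_fourierCoeffOn {T : ℝ} (hT : 0 < T) {F : ℝ → ℝ}
    (hF : IntervalIntegrable F volume 0 T) (n : ℤ) :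
    fourierCoeffOn hT (fun x => (F x : ℂ)) (-n) - fourierCoeffOn hT (fun x => (F x : ℂ)) n =
      2 * Complex.I / T * ∫ x in (0:ℝ)..T, F x * sin (2 * π * n * x / T) := by
  have hexp : ∀ x : ℝ, fourier n (x : AddCircle (T - 0)) - fourier (-n) (x : AddCircle (T - 0)) =
      2 * Complex.I * (sin (2 * π * n * x / T) : ℝ) := by
    intro x
    rw [fourier_coe_apply, fourier_coe_apply, Complex.ofReal_sin, Complex.sin]
    push_cast
    ring_nf
    simp only [Complex.I_sq]
    ring
  have he : ∀ m : ℤ, Continuous fun x : ℝ => fourier m (x : AddCircle (T - 0)) :=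
    fun m => (map_continuous _).comp (AddCircle.continuous_mk' _)
  have hFc : IntervalIntegrable (fun x => (F x : ℂ)) volume 0 T := by
    rw [intervalIntegrable_iff] at hF ⊢
    exact hF.ofReal
  rw [fourierCoeffOn_eq_integral, fourierCoeffOn_eq_integral, neg_neg, ← smul_sub]
  simp only [smul_eq_mul]
  rw [← intervalIntegral.integral_sub (hFc.continuousOn_mul (he _).continuousOn)
      (hFc.continuousOn_mul (he _).continuousOn)]
  simp only [← sub_mul, hexp, mul_assoc, intervalIntegral.integral_const_mul]
  rw [← intervalIntegral.integral_ofReal, sub_zero, Complex.real_smul]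
  simp only [Complex.ofReal_mul, mul_comm (F _ : ℂ)]
  push_cast
  ring

theorem ae_eq_zero_of_fourierCoeffOn_eq_zero {a b : ℝ} (hab : a < b) {f : ℝ → ℂ}
    (hf : MemLp f 2 (volume.restrict (Ioc a b))) (h : ∀ n, fourierCoeffOn hab f n = 0) :
    f =ᵐ[volume.restrict (Ioc a b)] 0 := by
  have hparseval := tsum_sq_fourierCoeffOn hab hf
  have hint : ∫ x in Ioc a b, ‖f x‖ ^ 2 = 0 := by
    simpa [h, (sub_pos.2 hab).ne', intervalIntegral.integral_of_le hab.le, eq_comm] using hparseval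
  rw [integral_eq_zero_iff_of_nonneg (fun x => by positivity)
    (hf.integrable_norm_pow two_ne_zero)] at hint
  filter_upwards [hint] with x hx
  simpa using hx

theorem ae_eq_comp_sub_left_of_integral_mul_sin_eq_zero {T : ℝ} (hT : 0 < T) {F : ℝ → ℝ}
    (hF : MemLp F 2 (volume.restrict (Ioc 0 T)))
    (h : ∀ n : ℤ, ∫ x in (0:ℝ)..T, F x * sin (2 * π * n * x / T) = 0) :
    ∀ᵐ x ∂volume.restrict (Ioc 0 T), F x = F (T - x) := by
  have hf : MemLp (fun x => (F x : ℂ)) 2 (volume.restrict (Ioc 0 T)) := hF.ofReal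
  have hfr : MemLp (fun x => (F (T - x) : ℂ)) 2 (volume.restrict (Ioc 0 T)) := by
    simpa only [zero_add] using hf.comp_add_sub_Ioc
  have hsymm : ∀ n, fourierCoeffOn hT (fun x => (F x : ℂ)) (-n) =
      fourierCoeffOn hT (fun x => (F x : ℂ)) n := fun n => by
    rw [← sub_eq_zero, fourierCoeffOn_neg_sub_fourierCoeffOn hT
      (hF.intervalIntegrable hT.le one_le_two) n, h n, Complex.ofReal_zero, mul_zero]
  have hzero := ae_eq_zero_of_fourierCoeffOn_eq_zero hT (hf.sub hfr) fun n => by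
    rw [fourierCoeffOn_sub hT (hf.intervalIntegrable hT.le one_le_two)
      (hfr.intervalIntegrable hT.le one_le_two),
      fourierCoeffOn_comp_sub_left hT (fun x => (F x : ℂ)), hsymm, sub_self]
  filter_upwards [hzero] with x hx
  simpa [sub_eq_zero] using hx

theorem stmt17 (g : ℝ → ℝ)
    (hg : MemLp g 2 (volume.restrict (Ioo (0:ℝ) 1)))
    (G : ℝ → ℝ) (hG : ∀ x, G x = ∫ t in (0:ℝ)..x, g t) (hG1 : G 1 = 0)
    (h : ∀ z : ℂ, z ≠ 0 →
      ∫ x in (0:ℝ)..1,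
        (g x : ℂ) * ((1 / z) * Complex.cos (z * (2 * x - 1))
          - Complex.sin (z * (2 * x - 1))) = 0) :
    ∀ᵐ x ∂(volume.restrict (Icc (0:ℝ) 1)),
      2 * G x - g x = 2 * G (1 - x) - g (1 - x) := by
  rw [Measure.restrict_congr_set Ioo_ae_eq_Ioc] at hg
  have hgI := hg.intervalIntegrable zero_le_one one_le_two
  have hGc : ContinuousOn G (Icc 0 1) := by
    simpa [← funext hG] using
      (hgI.absolutelyContinuousOnInterval_intervalIntegral left_mem_uIcc).continuousOn
  have hsin : ∀ c : ℝ, ∫ x in (0:ℝ)..1, (2 * G x - g x) * sin (c * (2 * x - 1)) = 0 := by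
    intro c
    rcases eq_or_ne c 0 with rfl | hc
    · simp
    refine integral_two_mul_primitive_sub_mul_sin_eq_zero hgI hG hG1 hc ?_
    rw [← Complex.ofReal_eq_zero, ← intervalIntegral.integral_ofReal, ← h c (mod_cast hc)]
    push_cast
    congr 1 with x
    ring
  have hF : MemLp (fun x => 2 * G x - g x) 2 (volume.restrict (Ioc 0 1)) :=
    ((hGc.memLp_restrict_Ioc 2).const_mul 2).sub hg
  have heven := ae_eq_comp_sub_left_of_integral_mul_sin_eq_zero one_pos hF
    (integral_mul_sin_two_pi_mul_div_eq_zero one_ne_zero hsin)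
  rwa [Measure.restrict_congr_set Ioc_ae_eq_Icc] at heven
end
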